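/- arXiv:2110.12121 — 10 statements merged into one kernel-verified Lean document; each statement's English description precedes it below -/
import Mathlib

section
/- Let V and W be finite-dimensional real inner product spaces with dim V = dim W = d ≥ 1. Let A : V → V and B : W → W be symmetric (self-adjoint) linear maps, and let L : W → V be a linear bijection such that ⟪B w, w⟫ = ⟪A (L w), L w⟫ for every w ∈ W, and such that there exist real numbers 0 ≤ α ≤ β with α ⟪w, w⟫ ≤ ⟪L w, L w⟫ ≤ β ⟪w, w⟫ for every w ∈ W. Then both A and B have d real eigenvalues (counted with multiplicity), and for every k ∈ {1, …, d} the k-th largest eigenvalue of B is sandwiched between α·λ_k(A) and β·λ_k(A), i.e. min(α λ_k(A), β λ_k(A)) ≤ λ_k(B) ≤ max(α λ_k(A), β λ_k(A)), where λ_k denotes the k-th largest eigenvalue. -/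
/-- The `k`-th largest eigenvalue of a symmetric endomorphism of a finite-dimensional real
inner product space, characterized via the Courant–Fischer max-min principle:
`λ_k(T) = max over k-dimensional subspaces C of min over nonzero u ∈ C of ⟪T u, u⟫ / ⟪u, u⟫`. -/
noncomputable def lambdaK {E : Type*} [NormedAddCommGroup E] [InnerProductSpace ℝ E]
    (T : E →ₗ[ℝ] E) (k : ℕ) : ℝ :=
  ⨆ C : {C : Submodule ℝ E // Module.finrank ℝ C = k},
    ⨅ u : {u : E // u ∈ C.1 ∧ u ≠ 0},
      (inner ℝ (T u.1) u.1 : ℝ) / (inner ℝ u.1 u.1 : ℝ)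

/-!
For `w ≠ 0` the hypotheses give `R_B(w) = c · R_A(L w)` for the Rayleigh quotients, with
`c = ⟪L w, L w⟫ / ⟪w, w⟫ ∈ [α, β]`, hence `ψ (R_A (L w)) ≤ R_B(w) ≤ φ (R_A (L w))` where
`φ x = max (α x) (β x)` and `ψ x = min (α x) (β x)`. Since `L` maps `k`-dimensional subspaces of
`W` bijectively onto those of `V`, and `φ, ψ` are monotone and continuous (so they commute with
the infima and suprema of the max-min formula), these pointwise bounds pass to `λ_k`.
-/

open Module Set

theorem min_mul_le_mul {a b c r : ℝ} (hac : a ≤ c) (hcb : c ≤ b) :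
    min (a * r) (b * r) ≤ c * r := by
  rcases le_total 0 r with hr | hr
  · exact (min_le_left _ _).trans (mul_le_mul_of_nonneg_right hac hr)
  · exact (min_le_right _ _).trans (mul_le_mul_of_nonpos_right hcb hr)

theorem mul_le_max_mul {a b c r : ℝ} (hac : a ≤ c) (hcb : c ≤ b) :
    c * r ≤ max (a * r) (b * r) := by
  rcases le_total 0 r with hr | hr
  · exact (mul_le_mul_of_nonneg_right hcb hr).trans (le_max_right _ _)
  · exact (mul_le_mul_of_nonpos_right hac hr).trans (le_max_left _ _)

section Rayleigh

variable {E : Type*} [NormedAddCommGroup E] [InnerProductSpace ℝ E]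

noncomputable def rayleigh (T : E →ₗ[ℝ] E) (u : E) : ℝ :=
  (inner ℝ (T u) u : ℝ) / (inner ℝ u u : ℝ)

noncomputable def minRayleigh (T : E →ₗ[ℝ] E) (C : Submodule ℝ E) : ℝ :=
  ⨅ u : {u : E // u ∈ C ∧ u ≠ 0}, rayleigh T u

theorem lambdaK_eq_iSup_minRayleigh (T : E →ₗ[ℝ] E) (k : ℕ) :
    lambdaK T k = ⨆ C : {C : Submodule ℝ E // finrank ℝ C = k}, minRayleigh T C :=
  rfl

variable [FiniteDimensional ℝ E]

theorem abs_rayleigh_le (T : E →ₗ[ℝ] E) (u : E) :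
    |rayleigh T u| ≤ ‖LinearMap.toContinuousLinearMap T‖ := by
  have := (LinearMap.toContinuousLinearMap T).rayleighQuotient_le_norm u
  simpa [ContinuousLinearMap.rayleighQuotient, ContinuousLinearMap.reApplyInnerSelf_apply,
    rayleigh, real_inner_self_eq_norm_sq, real_inner_comm] using this

theorem bddBelow_range_rayleigh (T : E →ₗ[ℝ] E) (C : Submodule ℝ E) :
    BddBelow (range fun u : {u : E // u ∈ C ∧ u ≠ 0} => rayleigh T u) :=
  ⟨-‖LinearMap.toContinuousLinearMap T‖, by
    rintro _ ⟨u, rfl⟩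
    exact neg_le_of_abs_le (abs_rayleigh_le T u)⟩

theorem nonempty_nonzero_of_finrank_pos {C : Submodule ℝ E} (hC : 0 < finrank ℝ C) :
    Nonempty {u : E // u ∈ C ∧ u ≠ 0} := by
  obtain ⟨u, hu⟩ := finrank_pos_iff_exists_ne_zero.mp hC
  exact ⟨⟨u, u.2, by simpa using hu⟩⟩

theorem nonempty_finrank_eq {k : ℕ} (hk : k ≤ finrank ℝ E) :
    Nonempty {C : Submodule ℝ E // finrank ℝ C = k} := by
  let b := finBasis ℝ E
  refine ⟨⟨Submodule.span ℝ (range (b ∘ Fin.castLE hk)), ?_⟩⟩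
  rw [finrank_span_eq_card (b.linearIndependent.comp _ (Fin.castLE_injective hk))]
  simp

theorem minRayleigh_le_rayleigh (T : E →ₗ[ℝ] E) {C : Submodule ℝ E} {u : E} (hu : u ∈ C)
    (hu₀ : u ≠ 0) : minRayleigh T C ≤ rayleigh T u :=
  ciInf_le (bddBelow_range_rayleigh T C) ⟨u, hu, hu₀⟩

theorem bddAbove_range_minRayleigh (T : E →ₗ[ℝ] E) {k : ℕ} (hk : 0 < k) :
    BddAbove (range fun C : {C : Submodule ℝ E // finrank ℝ C = k} => minRayleigh T C) := by
  refine ⟨‖LinearMap.toContinuousLinearMap T‖, ?_⟩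
  rintro _ ⟨C, rfl⟩
  obtain ⟨u⟩ := nonempty_nonzero_of_finrank_pos (C.2 ▸ hk)
  exact (minRayleigh_le_rayleigh T u.2.1 u.2.2).trans (le_of_abs_le (abs_rayleigh_le T u))

theorem minRayleigh_le_lambdaK (T : E →ₗ[ℝ] E) {k : ℕ} (hk : 0 < k) {C : Submodule ℝ E}
    (hC : finrank ℝ C = k) : minRayleigh T C ≤ lambdaK T k :=
  le_ciSup (bddAbove_range_minRayleigh T hk) (⟨C, hC⟩ : {C : Submodule ℝ E // finrank ℝ C = k})

end Rayleigh

section Comparison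

variable {V W : Type*}
  [NormedAddCommGroup V] [InnerProductSpace ℝ V] [FiniteDimensional ℝ V]
  [NormedAddCommGroup W] [InnerProductSpace ℝ W] [FiniteDimensional ℝ W]
  {A : V →ₗ[ℝ] V} {B : W →ₗ[ℝ] W} (L : W ≃ₗ[ℝ] V) {f : ℝ → ℝ}

theorem lambdaK_le_of_rayleigh_le (hf : Monotone f) (hf' : Continuous f)
    (h : ∀ w ≠ 0, rayleigh B w ≤ f (rayleigh A (L w))) {k : ℕ} (hk : 0 < k)
    (hkW : k ≤ finrank ℝ W) : lambdaK B k ≤ f (lambdaK A k) := by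
  have := nonempty_finrank_eq (E := W) hkW
  refine ciSup_le fun C => ?_
  set C' := C.1.map (L : W →ₗ[ℝ] V)
  have hC' : finrank ℝ C' = k := (LinearEquiv.finrank_map_eq L C.1).trans C.2
  have := nonempty_nonzero_of_finrank_pos (hC' ▸ hk)
  calc minRayleigh B C ≤ ⨅ v : {v : V // v ∈ C' ∧ v ≠ 0}, f (rayleigh A v) := by
        refine le_ciInf fun ⟨v, hv, hv₀⟩ => ?_
        obtain ⟨w, hw, rfl⟩ := Submodule.mem_map.mp hv
        have hw₀ : w ≠ 0 := by rintro rfl; simp at hv₀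
        exact (minRayleigh_le_rayleigh B hw hw₀).trans (h w hw₀)
    _ = f (minRayleigh A C') :=
        (hf.map_ciInf_of_continuousAt hf'.continuousAt (bddBelow_range_rayleigh A C')).symm
    _ ≤ f (lambdaK A k) := hf (minRayleigh_le_lambdaK A hk hC')

theorem le_lambdaK_of_le_rayleigh (hf : Monotone f) (hf' : Continuous f)
    (h : ∀ w ≠ 0, f (rayleigh A (L w)) ≤ rayleigh B w) {k : ℕ} (hk : 0 < k)
    (hkV : k ≤ finrank ℝ V) : f (lambdaK A k) ≤ lambdaK B k := by
  have := nonempty_finrank_eq (E := V) hkV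
  rw [lambdaK_eq_iSup_minRayleigh A, hf.map_ciSup_of_continuousAt hf'.continuousAt
    (bddAbove_range_minRayleigh A hk)]
  refine ciSup_le fun C' => ?_
  set C := C'.1.comap (L : W →ₗ[ℝ] V) with hC_def
  have hC : finrank ℝ C = k := by
    rw [hC_def, Submodule.comap_equiv_eq_map_symm, LinearEquiv.finrank_map_eq]
    exact C'.2
  have := nonempty_nonzero_of_finrank_pos (hC ▸ hk)
  calc f (minRayleigh A C') ≤ minRayleigh B C := by
        refine le_ciInf fun ⟨w, hw, hw₀⟩ => ?_
        have hLw₀ : L w ≠ 0 := by simpa using hw₀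
        exact (hf (minRayleigh_le_rayleigh A hw hLw₀)).trans (h w hw₀)
    _ ≤ lambdaK B k := minRayleigh_le_lambdaK B hk hC

end Comparison

theorem rayleigh_eq_div_mul_rayleigh {V W : Type*}
    [NormedAddCommGroup V] [InnerProductSpace ℝ V] [NormedAddCommGroup W] [InnerProductSpace ℝ W]
    {A : V →ₗ[ℝ] V} {B : W →ₗ[ℝ] W} (L : W ≃ₗ[ℝ] V)
    (hBL : ∀ w : W, (inner ℝ (B w) w : ℝ) = (inner ℝ (A (L w)) (L w) : ℝ)) {w : W} (hw : w ≠ 0) :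
    rayleigh B w = (inner ℝ (L w) (L w) : ℝ) / (inner ℝ w w : ℝ) * rayleigh A (L w) := by
  have hLw : (inner ℝ (L w) (L w) : ℝ) ≠ 0 := by simpa using hw
  rw [rayleigh, rayleigh, hBL]
  field_simp

theorem stmt0_general {V W : Type*}
    [NormedAddCommGroup V] [InnerProductSpace ℝ V] [FiniteDimensional ℝ V]
    [NormedAddCommGroup W] [InnerProductSpace ℝ W] [FiniteDimensional ℝ W]
    {d : ℕ}
    (hV : Module.finrank ℝ V = d) (hW : Module.finrank ℝ W = d)
    (A : V →ₗ[ℝ] V) (B : W →ₗ[ℝ] W)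
    (hA : A.IsSymmetric) (hB : B.IsSymmetric)
    (L : W ≃ₗ[ℝ] V)
    (hBL : ∀ w : W, (inner ℝ (B w) w : ℝ) = (inner ℝ (A (L w)) (L w) : ℝ))
    {α β : ℝ} (hα : 0 ≤ α) (hαβ : α ≤ β)
    (hL : ∀ w : W, α * (inner ℝ w w : ℝ) ≤ (inner ℝ (L w) (L w) : ℝ) ∧
      (inner ℝ (L w) (L w) : ℝ) ≤ β * (inner ℝ w w : ℝ)) :
    (∃ (b : OrthonormalBasis (Fin d) ℝ V) (μ : Fin d → ℝ), ∀ i, A (b i) = μ i • b i) ∧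
    (∃ (b : OrthonormalBasis (Fin d) ℝ W) (μ : Fin d → ℝ), ∀ i, B (b i) = μ i • b i) ∧
    ∀ k : ℕ, 1 ≤ k → k ≤ d →
      min (α * lambdaK A k) (β * lambdaK A k) ≤ lambdaK B k ∧
        lambdaK B k ≤ max (α * lambdaK A k) (β * lambdaK A k) := by
  have hβ : 0 ≤ β := hα.trans hαβ
  have hratio : ∀ w : W, w ≠ 0 →
      α ≤ (inner ℝ (L w) (L w) : ℝ) / inner ℝ w w ∧
        (inner ℝ (L w) (L w) : ℝ) / inner ℝ w w ≤ β := by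
    intro w hw
    have hw' : (0 : ℝ) < inner ℝ w w := real_inner_self_pos.mpr hw
    exact ⟨(le_div_iff₀ hw').mpr (hL w).1, (div_le_iff₀ hw').mpr (hL w).2⟩
  refine ⟨⟨hA.eigenvectorBasis hV, hA.eigenvalues hV,
      fun i => by simp [hA.apply_eigenvectorBasis]⟩,
    ⟨hB.eigenvectorBasis hW, hB.eigenvalues hW, fun i => by simp [hB.apply_eigenvectorBasis]⟩,
    fun k hk hkd => ⟨?_, ?_⟩⟩
  · refine le_lambdaK_of_le_rayleigh L
      ((monotone_mul_left_of_nonneg hα).min (monotone_mul_left_of_nonneg hβ)) (by fun_prop)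
      (fun w hw => ?_) hk (hV ▸ hkd)
    rw [rayleigh_eq_div_mul_rayleigh L hBL hw]
    exact min_mul_le_mul (hratio w hw).1 (hratio w hw).2
  · refine lambdaK_le_of_rayleigh_le L
      ((monotone_mul_left_of_nonneg hα).max (monotone_mul_left_of_nonneg hβ)) (by fun_prop)
      (fun w hw => ?_) hk (hW ▸ hkd)
    rw [rayleigh_eq_div_mul_rayleigh L hBL hw]
    exact mul_le_max_mul (hratio w hw).1 (hratio w hw).2

/-- Sandwich inequalities for the spectra of two symmetric linear maps related by a bijection
`L` satisfying `⟪B w, w⟫ = ⟪A (L w), L w⟫` and `α ⟪w, w⟫ ≤ ⟪L w, L w⟫ ≤ β ⟪w, w⟫`.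
Both `A` and `B` have `d` real eigenvalues (counted with multiplicity), and the `k`-th largest
eigenvalue of `B` is sandwiched between `α·λ_k(A)` and `β·λ_k(A)`. -/
theorem stmt0 {V W : Type*}
    [NormedAddCommGroup V] [InnerProductSpace ℝ V] [FiniteDimensional ℝ V]
    [NormedAddCommGroup W] [InnerProductSpace ℝ W] [FiniteDimensional ℝ W]
    {d : ℕ} (hd : 1 ≤ d)
    (hV : Module.finrank ℝ V = d) (hW : Module.finrank ℝ W = d)
    (A : V →ₗ[ℝ] V) (B : W →ₗ[ℝ] W)
    (hA : A.IsSymmetric) (hB : B.IsSymmetric)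
    (L : W ≃ₗ[ℝ] V)
    (hBL : ∀ w : W, (inner ℝ (B w) w : ℝ) = (inner ℝ (A (L w)) (L w) : ℝ))
    {α β : ℝ} (hα : 0 ≤ α) (hαβ : α ≤ β)
    (hL : ∀ w : W, α * (inner ℝ w w : ℝ) ≤ (inner ℝ (L w) (L w) : ℝ) ∧
      (inner ℝ (L w) (L w) : ℝ) ≤ β * (inner ℝ w w : ℝ)) :
    (∃ (b : OrthonormalBasis (Fin d) ℝ V) (μ : Fin d → ℝ), ∀ i, A (b i) = μ i • b i) ∧
    (∃ (b : OrthonormalBasis (Fin d) ℝ W) (μ : Fin d → ℝ), ∀ i, B (b i) = μ i • b i) ∧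
    ∀ k : ℕ, 1 ≤ k → k ≤ d →
      min (α * lambdaK A k) (β * lambdaK A k) ≤ lambdaK B k ∧
        lambdaK B k ≤ max (α * lambdaK A k) (β * lambdaK A k) :=
  stmt0_general hV hW A B hA hB L hBL hα hαβ hL
end

section
/- Let U₁, U₂ ∈ St(r,p) and let B₁, B₂ be r×r real symmetric positive definite matrices. Then U₁B₁U₁ᵀ = U₂B₂U₂ᵀ if and only if there exists an orthogonal matrix O ∈ 𝕆_r with U₂ = U₁O and B₂ = OᵀB₁O. -/
open Matrix

/-- Polar factorization of fixed-rank PSD matrices: for `U₁, U₂ ∈ St(r,p)` and symmetric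
positive definite `B₁, B₂`, `U₁B₁U₁ᵀ = U₂B₂U₂ᵀ` iff `U₂ = U₁O` and `B₂ = OᵀB₁O` for
some orthogonal `O`. -/
theorem stmt3 {p r : ℕ}
    (U₁ U₂ : Matrix (Fin p) (Fin r) ℝ) (hU₁ : U₁ᵀ * U₁ = 1) (hU₂ : U₂ᵀ * U₂ = 1)
    (B₁ B₂ : Matrix (Fin r) (Fin r) ℝ) (hB₁ : B₁.PosDef) (hB₂ : B₂.PosDef) :
    U₁ * B₁ * U₁ᵀ = U₂ * B₂ * U₂ᵀ ↔
      ∃ O : Matrix (Fin r) (Fin r) ℝ, Oᵀ * O = 1 ∧ U₂ = U₁ * O ∧ B₂ = Oᵀ * B₁ * O := by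
  constructor
  · intro heq
    have hdet : IsUnit B₂.det := isUnit_iff_ne_zero.mpr (ne_of_gt hB₂.det_pos)
    have hinv : B₂ * B₂⁻¹ = 1 := Matrix.mul_nonsing_inv B₂ hdet
    have hE : U₁ * B₁ * U₁ᵀ * U₂ = U₂ * B₂ := by
      rw [heq, Matrix.mul_assoc, hU₂, Matrix.mul_one]
    have hU2 : U₂ = U₁ * B₁ * U₁ᵀ * U₂ * B₂⁻¹ := by
      rw [hE, Matrix.mul_assoc, hinv, Matrix.mul_one]
    have hproj : U₁ * (U₁ᵀ * U₂) = U₂ := by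
      conv_lhs => rw [hU2]
      rw [show U₁ * (U₁ᵀ * (U₁ * B₁ * U₁ᵀ * U₂ * B₂⁻¹))
            = U₁ * (U₁ᵀ * U₁) * (B₁ * (U₁ᵀ * (U₂ * B₂⁻¹))) by
          simp only [Matrix.mul_assoc]]
      rw [hU₁, Matrix.mul_one]
      conv_rhs => rw [hU2]
      simp only [Matrix.mul_assoc]
    refine ⟨U₁ᵀ * U₂, ?_, hproj.symm, ?_⟩
    · have : (U₁ᵀ * U₂)ᵀ * (U₁ᵀ * U₂) = U₂ᵀ * (U₁ * (U₁ᵀ * U₂)) := by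
        rw [Matrix.transpose_mul, Matrix.transpose_transpose, Matrix.mul_assoc]
      rw [this, hproj, hU₂]
    · rw [Matrix.transpose_mul, Matrix.transpose_transpose]
      rw [show U₂ᵀ * U₁ * B₁ * (U₁ᵀ * U₂) = U₂ᵀ * (U₁ * B₁ * U₁ᵀ) * U₂ by
        simp only [Matrix.transpose_transpose, Matrix.mul_assoc]]
      rw [heq, show U₂ᵀ * (U₂ * B₂ * U₂ᵀ) * U₂ = (U₂ᵀ * U₂) * (B₂ * (U₂ᵀ * U₂)) by
        simp only [Matrix.mul_assoc]]
      rw [hU₂, Matrix.mul_one, Matrix.one_mul]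
  · rintro ⟨O, hO, rfl, rfl⟩
    have hO' : O * Oᵀ = 1 := mul_eq_one_comm.mp hO
    rw [Matrix.transpose_mul]
    rw [show U₁ * O * (Oᵀ * B₁ * O) * (Oᵀ * U₁ᵀ)
          = U₁ * ((O * Oᵀ) * (B₁ * ((O * Oᵀ) * U₁ᵀ))) by simp only [Matrix.mul_assoc]]
    rw [hO', Matrix.one_mul, Matrix.one_mul, Matrix.mul_assoc]
end

section
/- Let U₁, U₂ ∈ St(r,p₁), let B₁, B₂ be r×r real symmetric positive definite matrices, and let V₁, V₂ ∈ St(r,p₂). Then U₁B₁V₁ᵀ = U₂B₂V₂ᵀ if and only if there exists an orthogonal matrix O ∈ 𝕆_r with U₂ = U₁O, B₂ = OᵀB₁O and V₂ = V₁O. -/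
/-!
If `U₁ B₁ V₁ᴴ = U₂ B₂ V₂ᴴ`, multiplying on the right by `V₂ B₂⁻¹` shows that `U₂ = U₁ O` for
some `O`, which is unitary because both `U₁` and `U₂` have orthonormal columns; likewise
`V₂ = V₁ O'`. Cancelling the Stiefel factors gives `B₁ = O B₂ O'ᴴ = (O B₂ Oᴴ) (O O'ᴴ)`, a polar
decomposition of `B₁`. Since `B₁` is positive definite its polar decomposition is unique
(compare the squares `B₁ B₁ᴴ` and use uniqueness of positive square roots), so `O O'ᴴ = 1`,
i.e. `O = O'`.
-/

open Matrix
open scoped ComplexOrder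

namespace Matrix

variable {𝕜 : Type*} [RCLike 𝕜] {m n k p : Type*} [Fintype n] [DecidableEq n]

theorem conjTranspose_mul_self_eq_one_of_eq_mul [Fintype m] [DecidableEq k]
    {U₁ : Matrix m n 𝕜} {U₂ : Matrix m k 𝕜} {X : Matrix n k 𝕜}
    (hU₁ : U₁ᴴ * U₁ = 1) (hU₂ : U₂ᴴ * U₂ = 1) (h : U₂ = U₁ * X) : Xᴴ * X = 1 := by
  rw [← hU₂, h, conjTranspose_mul, Matrix.mul_assoc, ← Matrix.mul_assoc U₁ᴴ, hU₁, Matrix.one_mul]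

theorem eq_of_mul_mul_conjTranspose_eq_mul_mul_conjTranspose [Fintype m] [Fintype k] [Fintype p]
    [DecidableEq k] {U : Matrix m n 𝕜} {V : Matrix p k 𝕜} (hU : Uᴴ * U = 1) (hV : Vᴴ * V = 1)
    {X Y : Matrix n k 𝕜} (h : U * X * Vᴴ = U * Y * Vᴴ) : X = Y := by
  have cancel (Z : Matrix n k 𝕜) : Uᴴ * (U * Z * Vᴴ) * V = Z := by
    rw [← Matrix.mul_assoc, ← Matrix.mul_assoc, hU, Matrix.one_mul, Matrix.mul_assoc, hV,
      Matrix.mul_one]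
  rw [← cancel X, h, cancel]

theorem eq_mul_of_mul_mul_conjTranspose_eq [Fintype p] {U₁ U₂ : Matrix m n 𝕜}
    {B₁ B₂ : Matrix n n 𝕜} {V₁ V₂ : Matrix p n 𝕜} (hV₂ : V₂ᴴ * V₂ = 1) (hB₂ : IsUnit B₂.det)
    (h : U₁ * B₁ * V₁ᴴ = U₂ * B₂ * V₂ᴴ) : U₂ = U₁ * (B₁ * V₁ᴴ * V₂ * B₂⁻¹) := by
  calc U₂ = U₂ * B₂ * (V₂ᴴ * V₂) * B₂⁻¹ := by
        rw [hV₂, Matrix.mul_one, mul_nonsing_inv_cancel_right _ _ hB₂]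
    _ = U₁ * (B₁ * V₁ᴴ * V₂ * B₂⁻¹) := by simp only [← Matrix.mul_assoc, h]

theorem PosDef.eq_one_of_eq_mul_unitary {P Q W : Matrix n n 𝕜} (hP : P.PosDef)
    (hQ : Q.PosSemidef) (hW : W * Wᴴ = 1) (h : P = Q * W) : W = 1 := by
  open scoped MatrixOrder in
  have hPQ : P = Q := by
    refine (CFC.sq_eq_sq_iff P Q hP.posSemidef.nonneg hQ.nonneg).mp ?_
    calc P ^ 2 = P * Pᴴ := by rw [sq, hP.isHermitian.eq]
      _ = Q * (W * Wᴴ) * Qᴴ := by rw [h, conjTranspose_mul]; simp only [Matrix.mul_assoc]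
      _ = Q ^ 2 := by rw [hW, Matrix.mul_one, hQ.isHermitian.eq, sq]
  refine hP.isUnit.mul_left_cancel ?_
  rw [Matrix.mul_one, hPQ, ← h, hPQ]

theorem exists_unitary_of_mul_mul_conjTranspose_eq [Fintype m] [Fintype p]
    {U₁ U₂ : Matrix m n 𝕜} {B₁ B₂ : Matrix n n 𝕜} {V₁ V₂ : Matrix p n 𝕜}
    (hU₁ : U₁ᴴ * U₁ = 1) (hU₂ : U₂ᴴ * U₂ = 1) (hB₁ : B₁.PosDef) (hB₂ : B₂.PosDef)
    (hV₁ : V₁ᴴ * V₁ = 1) (hV₂ : V₂ᴴ * V₂ = 1) (h : U₁ * B₁ * V₁ᴴ = U₂ * B₂ * V₂ᴴ) :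
    ∃ O : Matrix n n 𝕜, Oᴴ * O = 1 ∧ U₂ = U₁ * O ∧ B₂ = Oᴴ * B₁ * O ∧ V₂ = V₁ * O := by
  have hB₂det : IsUnit B₂.det := hB₂.isUnit.map detMonoidHom
  have hT : V₁ * B₁ * U₁ᴴ = V₂ * B₂ * U₂ᴴ := by
    simpa only [conjTranspose_mul, conjTranspose_conjTranspose, hB₁.isHermitian.eq,
      hB₂.isHermitian.eq, Matrix.mul_assoc] using congrArg conjTranspose h
  obtain ⟨O, hU⟩ : ∃ O : Matrix n n 𝕜, U₂ = U₁ * O :=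
    ⟨_, eq_mul_of_mul_mul_conjTranspose_eq hV₂ hB₂det h⟩
  obtain ⟨O', hV⟩ : ∃ O' : Matrix n n 𝕜, V₂ = V₁ * O' :=
    ⟨_, eq_mul_of_mul_mul_conjTranspose_eq hU₂ hB₂det hT⟩
  have hO : Oᴴ * O = 1 := conjTranspose_mul_self_eq_one_of_eq_mul hU₁ hU₂ hU
  have hO' : O'ᴴ * O' = 1 := conjTranspose_mul_self_eq_one_of_eq_mul hV₁ hV₂ hV
  have hO_right : O * Oᴴ = 1 := mul_eq_one_comm.mp hO
  have hB₁_eq : B₁ = O * B₂ * O'ᴴ := by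
    refine eq_of_mul_mul_conjTranspose_eq_mul_mul_conjTranspose hU₁ hV₁ ?_
    rw [h, hU, hV, conjTranspose_mul]
    simp only [Matrix.mul_assoc]
  have hW : O * O'ᴴ = 1 := by
    refine hB₁.eq_one_of_eq_mul_unitary (hB₂.posSemidef.mul_mul_conjTranspose_same O) ?_ ?_
    · rw [conjTranspose_mul, conjTranspose_conjTranspose, Matrix.mul_assoc,
        ← Matrix.mul_assoc O'ᴴ, hO', Matrix.one_mul, hO_right]
    · rw [hB₁_eq, Matrix.mul_assoc (O * B₂) Oᴴ, ← Matrix.mul_assoc Oᴴ, hO, Matrix.one_mul]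
  have hOO' : O' = O := by
    rw [← Matrix.one_mul O', ← hW, Matrix.mul_assoc, hO', Matrix.mul_one]
  refine ⟨O, hO, hU, ?_, hOO' ▸ hV⟩
  rw [hB₁_eq, hOO']
  simp only [← Matrix.mul_assoc, hO, Matrix.one_mul]
  rw [Matrix.mul_assoc, hO, Matrix.mul_one]

theorem mul_mul_conjTranspose_eq_iff [Fintype m] [Fintype p] {U₁ U₂ : Matrix m n 𝕜}
    {B₁ B₂ : Matrix n n 𝕜} {V₁ V₂ : Matrix p n 𝕜} (hU₁ : U₁ᴴ * U₁ = 1) (hU₂ : U₂ᴴ * U₂ = 1)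
    (hB₁ : B₁.PosDef) (hB₂ : B₂.PosDef) (hV₁ : V₁ᴴ * V₁ = 1) (hV₂ : V₂ᴴ * V₂ = 1) :
    U₁ * B₁ * V₁ᴴ = U₂ * B₂ * V₂ᴴ ↔
      ∃ O : Matrix n n 𝕜, Oᴴ * O = 1 ∧ U₂ = U₁ * O ∧ B₂ = Oᴴ * B₁ * O ∧ V₂ = V₁ * O := by
  refine ⟨exists_unitary_of_mul_mul_conjTranspose_eq hU₁ hU₂ hB₁ hB₂ hV₁ hV₂, ?_⟩
  rintro ⟨O, hO, rfl, rfl, rfl⟩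
  have hO_right : O * Oᴴ = 1 := mul_eq_one_comm.mp hO
  calc U₁ * B₁ * V₁ᴴ = U₁ * (O * Oᴴ) * B₁ * (O * Oᴴ) * V₁ᴴ := by
        rw [hO_right, Matrix.mul_one, Matrix.mul_one]
    _ = U₁ * O * (Oᴴ * B₁ * O) * (V₁ * O)ᴴ := by
        rw [conjTranspose_mul]; simp only [Matrix.mul_assoc]

end Matrix

/-- Polar factorization of fixed-rank matrices: `U₁B₁V₁ᵀ = U₂B₂V₂ᵀ` iff `U₂ = U₁O`,
`B₂ = OᵀB₁O` and `V₂ = V₁O` for some orthogonal `O`. -/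
theorem stmt6 {p₁ p₂ r : ℕ}
    (U₁ U₂ : Matrix (Fin p₁) (Fin r) ℝ) (hU₁ : U₁ᵀ * U₁ = 1) (hU₂ : U₂ᵀ * U₂ = 1)
    (B₁ B₂ : Matrix (Fin r) (Fin r) ℝ) (hB₁ : B₁.PosDef) (hB₂ : B₂.PosDef)
    (V₁ V₂ : Matrix (Fin p₂) (Fin r) ℝ) (hV₁ : V₁ᵀ * V₁ = 1) (hV₂ : V₂ᵀ * V₂ = 1) :
    U₁ * B₁ * V₁ᵀ = U₂ * B₂ * V₂ᵀ ↔
      ∃ O : Matrix (Fin r) (Fin r) ℝ,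
        Oᵀ * O = 1 ∧ U₂ = U₁ * O ∧ B₂ = Oᵀ * B₁ * O ∧ V₂ = V₁ * O := by
  simp only [← conjTranspose_eq_transpose_of_trivial] at hU₁ hU₂ hV₁ hV₂ ⊢
  exact mul_mul_conjTranspose_eq_iff hU₁ hU₂ hB₁ hB₂ hV₁ hV₂
end

section
/- Let A be an r×r real symmetric positive definite matrix and let S be an r×r real symmetric matrix. Then there exists a unique matrix S' ∈ ℝ^{r×r} such that S' + S'ᵀ = S and S'A = AS'ᵀ (equivalently, S'A is symmetric). -/
/-!
For positive definite `A`, the Lyapunov operator `X ↦ AX + XA` is injective: if `AX + XA = 0` then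
`tr (Xᴴ A X) + tr (X A Xᴴ) = tr (Xᴴ (AX + XA)) = 0` is a sum of two nonnegative traces, so
`Xᴴ A X = 0` and hence `X = 0`. Being a linear endomorphism of a finite-dimensional space, it is
then bijective. The conditions `S' + S'ᴴ = S`, `S'A = AS'ᴴ` are equivalent to `AS' + S'A = AS`:
conjugating the latter gives `S'ᴴA + AS'ᴴ = SA`, and adding the two shows that `S' + S'ᴴ - S` is
in the kernel of the Lyapunov operator.
-/

open Matrix
open scoped ComplexOrder

namespace Matrix

variable {n m 𝕜 : Type*} [Fintype n] [RCLike 𝕜]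

theorem PosDef.conjTranspose_mul_mul_same_eq_zero_iff [Fintype m] {A : Matrix n n 𝕜}
    (hA : A.PosDef) {X : Matrix n m 𝕜} : Xᴴ * A * X = 0 ↔ X = 0 := by
  refine ⟨fun h => ?_, fun h => by simp [h]⟩
  classical
  refine ext_of_mulVec_single fun i => ?_
  by_contra hXi
  rw [zero_mulVec] at hXi
  have := hA.dotProduct_mulVec_pos hXi
  simp only [star_mulVec, dotProduct_mulVec, vecMul_vecMul] at this
  simp [h] at this

theorem PosDef.eq_zero_of_mul_add_mul_eq_zero {A X : Matrix n n 𝕜} (hA : A.PosDef)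
    (h : A * X + X * A = 0) : X = 0 := by
  have hsum : (Xᴴ * A * X).trace + (X * A * Xᴴ).trace = 0 := by
    rw [trace_mul_comm (X * A), mul_assoc, ← trace_add, ← mul_add, h, mul_zero,
      trace_zero]
  have hXAX := hA.posSemidef.conjTranspose_mul_mul_same X
  obtain ⟨htr, -⟩ := (add_eq_zero_iff_of_nonneg hXAX.trace_nonneg
    (hA.posSemidef.mul_mul_conjTranspose_same X).trace_nonneg).1 hsum
  exact hA.conjTranspose_mul_mul_same_eq_zero_iff.1 (hXAX.trace_eq_zero_iff.1 htr)

def lyapunovMap (A : Matrix n n 𝕜) : Matrix n n 𝕜 →ₗ[𝕜] Matrix n n 𝕜 :=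
  LinearMap.mulLeft 𝕜 A + LinearMap.mulRight 𝕜 A

@[simp]
theorem lyapunovMap_apply (A X : Matrix n n 𝕜) : lyapunovMap A X = A * X + X * A := rfl

theorem PosDef.lyapunovMap_bijective {A : Matrix n n 𝕜} (hA : A.PosDef) :
    Function.Bijective (lyapunovMap A) := by
  have hinj : Function.Injective (lyapunovMap A) :=
    (injective_iff_map_eq_zero _).2 fun _ h => hA.eq_zero_of_mul_add_mul_eq_zero h
  exact ⟨hinj, LinearMap.injective_iff_surjective.1 hinj⟩

theorem PosDef.add_conjTranspose_eq_and_mul_eq_iff {A S X : Matrix n n 𝕜} (hA : A.PosDef)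
    (hS : S.IsHermitian) :
    X + Xᴴ = S ∧ X * A = A * Xᴴ ↔ lyapunovMap A X = A * S := by
  constructor
  · rintro ⟨rfl, hXA⟩
    rw [lyapunovMap_apply, hXA, mul_add]
  · intro h
    rw [lyapunovMap_apply] at h
    have h_star : Xᴴ * A + A * Xᴴ = S * A := by
      simpa [hA.isHermitian.eq, hS.eq] using congr(($h)ᴴ)
    have hsum : X + Xᴴ = S := by
      rw [← sub_eq_zero]
      refine hA.eq_zero_of_mul_add_mul_eq_zero ?_
      linear_combination (norm := noncomm_ring) h + h_star
    refine ⟨hsum, ?_⟩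
    linear_combination (norm := noncomm_ring) h - A * hsum

theorem PosDef.existsUnique_add_conjTranspose_eq_and_mul_eq {A S : Matrix n n 𝕜} (hA : A.PosDef)
    (hS : S.IsHermitian) : ∃! X : Matrix n n 𝕜, X + Xᴴ = S ∧ X * A = A * Xᴴ :=
  (existsUnique_congr fun _ => hA.add_conjTranspose_eq_and_mul_eq_iff hS).2
    (hA.lyapunovMap_bijective.existsUnique _)

end Matrix

/-- For a symmetric positive definite `A` and a symmetric `S`, there exists a unique
matrix `S'` with `S' + S'ᵀ = S` and `S'A = AS'ᵀ` (i.e. `S'A` is symmetric). -/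
theorem stmt9 {r : ℕ} (A S : Matrix (Fin r) (Fin r) ℝ) (hA : A.PosDef) (hS : S.IsSymm) :
    ∃! S' : Matrix (Fin r) (Fin r) ℝ, S' + S'ᵀ = S ∧ S' * A = A * S'ᵀ := by
  simp only [← conjTranspose_eq_transpose_of_trivial]
  exact hA.existsUnique_add_conjTranspose_eq_and_mul_eq
    (by rwa [IsHermitian, conjTranspose_eq_transpose_of_trivial])
end

section
/- Let W be an r×r real symmetric positive definite matrix, let U ∈ St(r,p) and let U⊥ be an orthonormal completion of U. Let P ∈ ℝ^{r×r} be invertible and set Y := UP. Let S ∈ ℝ^{r×r} be such that S P⁻ᵀ W P⁻¹ is symmetric, let D ∈ ℝ^{(p−r)×r}, and set θ := (US + U⊥D) P⁻ᵀ. Then 2·λmin(P W⁻¹ Pᵀ)·tr(W θᵀθ) ≤ ‖Yθᵀ + θYᵀ‖_F² ≤ 4·λmax(P W⁻¹ Pᵀ)·tr(W θᵀθ). -/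
open Matrix

/-- The smallest eigenvalue of a (Hermitian) real matrix; junk value `0` otherwise. -/
noncomputable def eigMin {n : ℕ} (M : Matrix (Fin n) (Fin n) ℝ) : ℝ := by
  classical exact if h : M.IsHermitian then ⨅ i, h.eigenvalues i else 0

/-- The largest eigenvalue of a (Hermitian) real matrix; junk value `0` otherwise. -/
noncomputable def eigMax {n : ℕ} (M : Matrix (Fin n) (Fin n) ℝ) : ℝ := by
  classical exact if h : M.IsHermitian then ⨆ i, h.eigenvalues i else 0

/-- The squared Frobenius norm `‖A‖_F² = tr(AᵀA)`. -/
noncomputable def frobSq {m n : ℕ} (A : Matrix (Fin m) (Fin n) ℝ) : ℝ :=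
  Matrix.trace (Aᵀ * A)

/-!
Put `R = PW⁻¹Pᵀ` and `X = θPᵀ = US + U⊥D`. Then `Yθᵀ + θYᵀ = UXᵀ + XUᵀ`, and orthonormality of
`[U U⊥]` gives `‖Yθᵀ + θYᵀ‖² = ‖S + Sᵀ‖² + 2‖D‖² = 2‖S‖² + 2 tr(S²) + 2‖D‖²` and
`tr(Wθᵀθ) = tr(R⁻¹(SᵀS + DᵀD))`. Conjugating a PSD matrix `M` by `√R⁻¹` shows
`λmin(R) tr(R⁻¹M) ≤ tr M ≤ λmax(R) tr(R⁻¹M)`; apply it to `M = SᵀS + DᵀD`.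
What remains is `0 ≤ tr(S²) ≤ ‖S‖²`. The upper bound is `‖S - Sᵀ‖² ≥ 0`; the lower one is where
the symmetry of `SR⁻¹` enters: it gives `tr(S²) = tr(R⁻¹ · SᵀRS)`, a trace of a product of two
PSD matrices.
-/

open scoped MatrixOrder

namespace Matrix

variable {n : Type*} [Fintype n]

lemma PosSemidef.trace_mul_nonneg {X Y : Matrix n n ℝ} (hX : X.PosSemidef)
    (hY : Y.PosSemidef) : 0 ≤ (X * Y).trace := by
  classical
  obtain ⟨B, rfl⟩ := CStarAlgebra.nonneg_iff_eq_star_mul_self.mp hX.nonneg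
  rw [Matrix.mul_assoc, trace_mul_comm]
  exact (hY.mul_mul_conjTranspose_same B).trace_nonneg

variable [DecidableEq n]

lemma IsHermitian.posSemidef_sub_smul_one {A : Matrix n n ℝ} (hA : A.IsHermitian) {c : ℝ}
    (hc : ∀ i, c ≤ hA.eigenvalues i) : (A - c • 1).PosSemidef := by
  have : algebraMap ℝ _ c ≤ A := by
    rw [algebraMap_le_iff_le_spectrum hA.isSelfAdjoint, hA.spectrum_real_eq_range_eigenvalues]
    rintro _ ⟨i, rfl⟩
    exact hc i
  rwa [Algebra.algebraMap_eq_smul_one] at this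

lemma IsHermitian.posSemidef_smul_one_sub {A : Matrix n n ℝ} (hA : A.IsHermitian) {c : ℝ}
    (hc : ∀ i, hA.eigenvalues i ≤ c) : (c • 1 - A).PosSemidef := by
  have : A ≤ algebraMap ℝ _ c := by
    rw [le_algebraMap_iff_spectrum_le hA.isSelfAdjoint, hA.spectrum_real_eq_range_eigenvalues]
    rintro _ ⟨i, rfl⟩
    exact hc i
  rwa [Algebra.algebraMap_eq_smul_one] at this

lemma exists_posSemidef_trace_eq_trace_inv_mul {R M : Matrix n n ℝ} (hR : R.PosDef)
    (hM : M.PosSemidef) :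
    ∃ X : Matrix n n ℝ, X.PosSemidef ∧ X.trace = (R⁻¹ * M).trace ∧ (X * R).trace = M.trace := by
  set H := CFC.sqrt R
  have hHH : H * H = R := CFC.sqrt_mul_sqrt_self R hR.posSemidef.nonneg
  have hHdet : IsUnit H.det := (isUnit_iff_isUnit_det H).1 <|
    (CFC.isUnit_sqrt_iff R hR.posSemidef.nonneg).2 hR.isUnit
  have hHinv : (H⁻¹)ᴴ = H⁻¹ := by
    rw [conjTranspose_nonsing_inv, (CFC.sqrt_nonneg R).posSemidef.isHermitian.eq]
  refine ⟨H⁻¹ * M * H⁻¹, by simpa only [hHinv] using hM.mul_mul_conjTranspose_same H⁻¹, ?_, ?_⟩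
  · rw [trace_mul_comm, ← Matrix.mul_assoc, ← hHH, Matrix.mul_inv_rev]
  · rw [← hHH, ← Matrix.mul_assoc, nonsing_inv_mul_cancel_right (h := hHdet), trace_mul_comm,
      mul_nonsing_inv_cancel_left (h := hHdet)]

lemma trace_mul_self_nonneg_of_isSymm_mul {Q S : Matrix n n ℝ} (hQ : Q.PosDef)
    (hS : (S * Q).IsSymm) : 0 ≤ (S * S).trace := by
  have hSS : S * S = Q * (Sᵀ * Q⁻¹ * S) := by
    have hQt : Qᵀ = Q := hQ.isHermitian
    calc S * S = S * Q * Q⁻¹ * S := by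
          rw [mul_nonsing_inv_cancel_right (h := (isUnit_iff_isUnit_det Q).1 hQ.isUnit)]
      _ = (S * Q)ᵀ * Q⁻¹ * S := by rw [hS.eq]
      _ = Q * (Sᵀ * Q⁻¹ * S) := by rw [transpose_mul, hQt]; simp only [Matrix.mul_assoc]
  rw [hSS]
  exact hQ.posSemidef.trace_mul_nonneg (hQ.inv.posSemidef.conjTranspose_mul_mul_same S)

end Matrix

lemma eigMin_le_eigenvalues {n : ℕ} {A : Matrix (Fin n) (Fin n) ℝ} (hA : A.IsHermitian)
    (i : Fin n) : eigMin A ≤ hA.eigenvalues i := by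
  unfold eigMin
  rw [dif_pos hA]
  exact ciInf_le (Set.finite_range _).bddBelow i

lemma eigenvalues_le_eigMax {n : ℕ} {A : Matrix (Fin n) (Fin n) ℝ} (hA : A.IsHermitian)
    (i : Fin n) : hA.eigenvalues i ≤ eigMax A := by
  unfold eigMax
  rw [dif_pos hA]
  exact le_ciSup (Set.finite_range _).bddAbove i

lemma eigMin_mul_trace_le_trace_mul {n : ℕ} {R X : Matrix (Fin n) (Fin n) ℝ}
    (hR : R.IsHermitian) (hX : X.PosSemidef) : eigMin R * X.trace ≤ (X * R).trace := by
  have h := hX.trace_mul_nonneg (hR.posSemidef_sub_smul_one (eigMin_le_eigenvalues hR))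
  rw [Matrix.mul_sub, trace_sub, Matrix.mul_smul, Matrix.mul_one, trace_smul, smul_eq_mul] at h
  linarith

lemma trace_mul_le_eigMax_mul_trace {n : ℕ} {R X : Matrix (Fin n) (Fin n) ℝ}
    (hR : R.IsHermitian) (hX : X.PosSemidef) : (X * R).trace ≤ eigMax R * X.trace := by
  have h := hX.trace_mul_nonneg (hR.posSemidef_smul_one_sub (eigenvalues_le_eigMax hR))
  rw [Matrix.mul_sub, trace_sub, Matrix.mul_smul, Matrix.mul_one, trace_smul, smul_eq_mul] at h
  linarith

lemma eigMin_mul_trace_inv_mul_le_trace {n : ℕ} {R M : Matrix (Fin n) (Fin n) ℝ}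
    (hR : R.PosDef) (hM : M.PosSemidef) : eigMin R * (R⁻¹ * M).trace ≤ M.trace := by
  obtain ⟨X, hX, htrX, htrXR⟩ := exists_posSemidef_trace_eq_trace_inv_mul hR hM
  rw [← htrX, ← htrXR]
  exact eigMin_mul_trace_le_trace_mul hR.isHermitian hX

lemma trace_le_eigMax_mul_trace_inv_mul {n : ℕ} {R M : Matrix (Fin n) (Fin n) ℝ}
    (hR : R.PosDef) (hM : M.PosSemidef) : M.trace ≤ eigMax R * (R⁻¹ * M).trace := by
  obtain ⟨X, hX, htrX, htrXR⟩ := exists_posSemidef_trace_eq_trace_inv_mul hR hM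
  rw [← htrX, ← htrXR]
  exact trace_mul_le_eigMax_mul_trace hR.isHermitian hX

namespace Matrix

variable {α : Type*} [CommRing α] {m n l k : Type*} [Fintype m] [Fintype n] [Fintype l]
  [DecidableEq n] [DecidableEq l] {U : Matrix m n α} {V : Matrix m l α}

lemma transpose_mul_self_mul_add_mul (hU : Uᵀ * U = 1) (hV : Vᵀ * V = 1) (hUV : Uᵀ * V = 0)
    (A : Matrix n k α) (B : Matrix l k α) :
    (U * A + V * B)ᵀ * (U * A + V * B) = Aᵀ * A + Bᵀ * B := by
  have hVU : Vᵀ * U = 0 := by rw [← transpose_transpose U, ← transpose_mul, hUV, transpose_zero]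
  simp only [transpose_add, transpose_mul, Matrix.add_mul, Matrix.mul_add, Matrix.mul_assoc]
  simp only [← Matrix.mul_assoc Uᵀ, ← Matrix.mul_assoc Vᵀ, hU, hV, hUV, hVU, Matrix.one_mul,
    Matrix.zero_mul, Matrix.mul_zero, add_zero, zero_add]

end Matrix

section FrobSq

variable {m n l k : ℕ}

lemma frobSq_nonneg (A : Matrix (Fin m) (Fin n) ℝ) : 0 ≤ frobSq A :=
  (posSemidef_conjTranspose_mul_self A).trace_nonneg

lemma frobSq_transpose (A : Matrix (Fin m) (Fin n) ℝ) : frobSq Aᵀ = frobSq A := by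
  rw [frobSq, frobSq, transpose_transpose, trace_mul_comm]

lemma frobSq_mul_add_mul {U : Matrix (Fin m) (Fin n) ℝ} {V : Matrix (Fin m) (Fin l) ℝ}
    (hU : Uᵀ * U = 1) (hV : Vᵀ * V = 1) (hUV : Uᵀ * V = 0)
    (A : Matrix (Fin n) (Fin k) ℝ) (B : Matrix (Fin l) (Fin k) ℝ) :
    frobSq (U * A + V * B) = frobSq A + frobSq B := by
  rw [frobSq, transpose_mul_self_mul_add_mul hU hV hUV, trace_add, frobSq, frobSq]

lemma frobSq_mul {U : Matrix (Fin m) (Fin n) ℝ} (hU : Uᵀ * U = 1)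
    (A : Matrix (Fin n) (Fin k) ℝ) : frobSq (U * A) = frobSq A := by
  rw [frobSq, transpose_mul, Matrix.mul_assoc, ← Matrix.mul_assoc Uᵀ, hU, Matrix.one_mul, frobSq]

lemma frobSq_add_transpose (S : Matrix (Fin n) (Fin n) ℝ) :
    frobSq (S + Sᵀ) = 2 * frobSq S + 2 * (S * S).trace := by
  have h : (Sᵀ * Sᵀ).trace = (S * S).trace := by rw [← transpose_mul, trace_transpose]
  simp only [frobSq, transpose_add, transpose_transpose, Matrix.add_mul, Matrix.mul_add,
    trace_add, h, trace_mul_comm S Sᵀ]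
  ring

lemma trace_mul_self_le_frobSq (S : Matrix (Fin n) (Fin n) ℝ) : (S * S).trace ≤ frobSq S := by
  have h : (Sᵀ * Sᵀ).trace = (S * S).trace := by rw [← transpose_mul, trace_transpose]
  have hnonneg := (posSemidef_conjTranspose_mul_self (S - Sᵀ)).trace_nonneg
  simp only [conjTranspose_eq_transpose_of_trivial, transpose_sub, transpose_transpose,
    Matrix.sub_mul, Matrix.mul_sub, trace_sub, h, trace_mul_comm S Sᵀ] at hnonneg
  rw [frobSq]
  linarith

lemma frobSq_mul_transpose_add_mul_transpose {U : Matrix (Fin m) (Fin n) ℝ}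
    {V : Matrix (Fin m) (Fin l) ℝ} (hU : Uᵀ * U = 1) (hV : Vᵀ * V = 1) (hUV : Uᵀ * V = 0)
    (S : Matrix (Fin n) (Fin n) ℝ) (D : Matrix (Fin l) (Fin n) ℝ) :
    frobSq (U * (U * S + V * D)ᵀ + (U * S + V * D) * Uᵀ) = frobSq (S + Sᵀ) + 2 * frobSq D := by
  have hsplit : U * (U * S + V * D)ᵀ + (U * S + V * D) * Uᵀ
      = U * (U * (S + Sᵀ) + V * D)ᵀ + V * (U * Dᵀ)ᵀ := by
    simp only [transpose_add, transpose_mul, transpose_transpose, Matrix.mul_add,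
      Matrix.add_mul, Matrix.mul_assoc]
    abel
  rw [hsplit, frobSq_mul_add_mul hU hV hUV, frobSq_transpose, frobSq_transpose,
    frobSq_mul_add_mul hU hV hUV, frobSq_mul hU, frobSq_transpose]
  ring

end FrobSq

/-- Spectrum bounds for the map `θ ↦ Yθᵀ + θYᵀ` on the horizontal space of the full-rank
quotient geometry on fixed-rank PSD matrices:
`2·λmin(PW⁻¹Pᵀ)·tr(Wθᵀθ) ≤ ‖Yθᵀ + θYᵀ‖_F² ≤ 4·λmax(PW⁻¹Pᵀ)·tr(Wθᵀθ)`. -/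
theorem stmt10 {p r : ℕ}
    (W : Matrix (Fin r) (Fin r) ℝ) (hW : W.PosDef)
    (U : Matrix (Fin p) (Fin r) ℝ) (Uperp : Matrix (Fin p) (Fin (p - r)) ℝ)
    (hU : Uᵀ * U = 1) (hUperp : Uperpᵀ * Uperp = 1) (hUUperp : Uᵀ * Uperp = 0)
    (P : Matrix (Fin r) (Fin r) ℝ) (hP : IsUnit P)
    (Y : Matrix (Fin p) (Fin r) ℝ) (hY : Y = U * P)
    (S : Matrix (Fin r) (Fin r) ℝ) (hS : (S * (P⁻¹)ᵀ * W * P⁻¹).IsSymm)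
    (D : Matrix (Fin (p - r)) (Fin r) ℝ)
    (θ : Matrix (Fin p) (Fin r) ℝ) (hθ : θ = (U * S + Uperp * D) * (P⁻¹)ᵀ) :
    2 * eigMin (P * W⁻¹ * Pᵀ) * Matrix.trace (W * θᵀ * θ) ≤ frobSq (Y * θᵀ + θ * Yᵀ) ∧
    frobSq (Y * θᵀ + θ * Yᵀ) ≤ 4 * eigMax (P * W⁻¹ * Pᵀ) * Matrix.trace (W * θᵀ * θ) := by
  subst hY hθ
  have hPdet : IsUnit P.det := (isUnit_iff_isUnit_det P).1 hP
  have hPtdet : IsUnit Pᵀ.det := by rwa [det_transpose]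
  set R := P * W⁻¹ * Pᵀ
  have hR : R.PosDef := by
    simpa using hW.inv.mul_mul_conjTranspose_same (vecMul_injective_of_isUnit hP)
  have hRinv : R⁻¹ = (P⁻¹)ᵀ * W * P⁻¹ := by
    rw [Matrix.mul_inv_rev, Matrix.mul_inv_rev, transpose_nonsing_inv,
      nonsing_inv_nonsing_inv _ ((isUnit_iff_isUnit_det W).1 hW.isUnit), Matrix.mul_assoc]
  set X := U * S + Uperp * D
  have hZ : U * P * (X * (P⁻¹)ᵀ)ᵀ + X * (P⁻¹)ᵀ * (U * P)ᵀ = U * Xᵀ + X * Uᵀ := by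
    simp only [transpose_mul, transpose_transpose, transpose_nonsing_inv, Matrix.mul_assoc,
      mul_nonsing_inv_cancel_left (h := hPdet), nonsing_inv_mul_cancel_left (h := hPtdet)]
  have hT : (W * (X * (P⁻¹)ᵀ)ᵀ * (X * (P⁻¹)ᵀ)).trace = (R⁻¹ * (Sᵀ * S + Dᵀ * D)).trace := by
    rw [hRinv, ← transpose_mul_self_mul_add_mul hU hUperp hUUperp, transpose_mul,
      transpose_transpose, ← Matrix.mul_assoc, trace_mul_comm]
    simp only [Matrix.mul_assoc]
    rfl
  have hgram : (Sᵀ * S + Dᵀ * D).PosSemidef :=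
    (posSemidef_conjTranspose_mul_self S).add (posSemidef_conjTranspose_mul_self D)
  have hlower := eigMin_mul_trace_inv_mul_le_trace hR hgram
  have hupper := trace_le_eigMax_mul_trace_inv_mul hR hgram
  have hS2_nonneg := trace_mul_self_nonneg_of_isSymm_mul hR.inv <| by
    rwa [hRinv, ← Matrix.mul_assoc, ← Matrix.mul_assoc]
  have hS2_le := trace_mul_self_le_frobSq S
  have hD := frobSq_nonneg D
  have hsum : (Sᵀ * S + Dᵀ * D).trace = frobSq S + frobSq D := trace_add _ _
  rw [hZ, frobSq_mul_transpose_add_mul_transpose hU hUperp hUUperp, frobSq_add_transpose, hT]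
  rw [hsum] at hlower hupper
  constructor <;> linarith
end

section
/- Let B be an r×r real symmetric positive definite matrix and let S ∈ ℝ^{r×r} be arbitrary. Then there exists a unique pair (S', Ω') of r×r real matrices such that S' is symmetric (S' = S'ᵀ), Ω' is skew-symmetric (Ω' = −Ω'ᵀ), and Ω'B + S' − BΩ'ᵀ = S. -/
/-!
Put `L X = X * B + B * X`. For skew `Ω'` the equation reads `L Ω' + S' = S`, and its transpose
reads `-L Ω' + S' = Sᵀ`; so `S'` must be the symmetric part of `S` and `L Ω'` its skew part.
For positive definite `B`, `L` is injective, since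
`tr (Xᴴ * L X) = tr (X * B * Xᴴ) + tr (Xᴴ * B * X)` is a sum of traces of positive semidefinite
matrices; hence `L` is bijective. As `L` commutes with transposition, the unique solution of
`L Ω = (S - Sᵀ) / 2` is skew.
-/

open Matrix

namespace Matrix

section Symmetric

variable {n R : Type*} [Fintype n] [CommRing R] {B : Matrix n n R}

lemma transpose_mul_add_mul (hB : Bᵀ = B) (X : Matrix n n R) :
    (X * B + B * X)ᵀ = Xᵀ * B + B * Xᵀ := by
  rw [transpose_add, transpose_mul, transpose_mul, hB, add_comm]

lemma transpose_eq_neg_of_mul_add_mul_eq (hB : Bᵀ = B)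
    (hL : Function.Injective fun X : Matrix n n R => X * B + B * X) {Ω A : Matrix n n R}
    (hΩ : Ω * B + B * Ω = A) (hA : Aᵀ = -A) : Ωᵀ = -Ω := by
  have h : -Ωᵀ * B + B * -Ωᵀ = Ω * B + B * Ω := by
    rw [neg_mul, mul_neg, ← neg_add, ← transpose_mul_add_mul hB, hΩ, hA, neg_neg]
  exact neg_eq_iff_eq_neg.mp (hL h)

lemma mul_add_sub_mul_transpose_eq_iff [Invertible (2 : R)] (hB : Bᵀ = B)
    {S S' Ω : Matrix n n R} (hS' : S'.IsSymm) (hΩ : Ωᵀ = -Ω) :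
    Ω * B + S' - B * Ωᵀ = S ↔ S' = ⅟(2 : R) • (S + Sᵀ) ∧ Ω * B + B * Ω = ⅟(2 : R) • (S - Sᵀ) := by
  have hK : (Ω * B + B * Ω)ᵀ = -(Ω * B + B * Ω) := by
    rw [transpose_mul_add_mul hB, hΩ, neg_mul, mul_neg, neg_add]
  rw [hΩ, mul_neg, sub_neg_eq_add]
  constructor
  · intro h
    have hS : S = (Ω * B + B * Ω) + S' := by rw [← h]; abel
    have hSt : Sᵀ = -(Ω * B + B * Ω) + S' := by rw [hS, transpose_add, hK, hS'.eq]
    constructor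
    · rw [hSt, hS, show Ω * B + B * Ω + S' + (-(Ω * B + B * Ω) + S') = (2 : R) • S' by module,
        smul_smul, invOf_mul_self, one_smul]
    · rw [hSt, hS, show Ω * B + B * Ω + S' - (-(Ω * B + B * Ω) + S') = (2 : R) • (Ω * B + B * Ω)
        by module, smul_smul, invOf_mul_self, one_smul]
  · rintro ⟨rfl, hK'⟩
    rw [add_right_comm, hK', ← smul_add, show S - Sᵀ + (S + Sᵀ) = (2 : R) • S by module,
      smul_smul, invOf_mul_self, one_smul]

theorem existsUnique_isSymm_transpose_eq_neg [Invertible (2 : R)] (hB : Bᵀ = B)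
    (hL : Function.Bijective fun X : Matrix n n R => X * B + B * X) (S : Matrix n n R) :
    ∃! q : Matrix n n R × Matrix n n R,
      q.1.IsSymm ∧ q.2ᵀ = -q.2 ∧ q.2 * B + q.1 - B * q.2ᵀ = S := by
  obtain ⟨Ω, hΩ⟩ := hL.2 (⅟(2 : R) • (S - Sᵀ))
  have hskew : Ωᵀ = -Ω := transpose_eq_neg_of_mul_add_mul_eq hB hL.1 hΩ <| by
    rw [transpose_smul, transpose_sub, transpose_transpose, ← smul_neg, neg_sub]
  have hsymm : (⅟(2 : R) • (S + Sᵀ)).IsSymm := by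
    rw [IsSymm, transpose_smul, transpose_add, transpose_transpose, add_comm]
  refine ⟨(⅟(2 : R) • (S + Sᵀ), Ω),
    ⟨hsymm, hskew, (mul_add_sub_mul_transpose_eq_iff hB hsymm hskew).mpr ⟨rfl, hΩ⟩⟩, ?_⟩
  rintro ⟨S', Ω'⟩ ⟨hS', hΩ', h⟩
  obtain ⟨rfl, h'⟩ := (mul_add_sub_mul_transpose_eq_iff hB hS' hΩ').mp h
  exact Prod.ext rfl (hL.1 (h'.trans hΩ.symm))

end Symmetric

section PosDef

variable {n 𝕜 : Type*} [Fintype n] [RCLike 𝕜] {B : Matrix n n 𝕜}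
open scoped ComplexOrder

lemma PosDef.eq_zero_of_conjTranspose_mul_mul_same_eq_zero (hB : B.PosDef) {X : Matrix n n 𝕜}
    (h : Xᴴ * B * X = 0) : X = 0 := by
  refine ext_iff_mulVec.mpr fun v => ?_
  by_contra hv
  rw [zero_mulVec] at hv
  have hpos := hB.dotProduct_mulVec_pos hv
  rw [star_mulVec, ← dotProduct_mulVec, mulVec_mulVec, mulVec_mulVec, h,
    zero_mulVec, dotProduct_zero] at hpos
  exact hpos.false

lemma PosDef.eq_zero_of_mul_add_mul_eq_zero_s13 (hB : B.PosDef) {X : Matrix n n 𝕜}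
    (h : X * B + B * X = 0) : X = 0 := by
  have htrace : (X * B * Xᴴ).trace + (Xᴴ * B * X).trace = 0 := by
    calc (X * B * Xᴴ).trace + (Xᴴ * B * X).trace = (Xᴴ * (X * B + B * X)).trace := by
          rw [trace_mul_cycle, mul_add, trace_add, Matrix.mul_assoc, Matrix.mul_assoc]
      _ = 0 := by rw [h, Matrix.mul_zero, trace_zero]
  have hnonneg₁ := (hB.posSemidef.mul_mul_conjTranspose_same X).trace_nonneg
  have hnonneg₂ := (hB.posSemidef.conjTranspose_mul_mul_same X).trace_nonneg
  have hzero := ((add_eq_zero_iff_of_nonneg hnonneg₁ hnonneg₂).mp htrace).2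
  exact hB.eq_zero_of_conjTranspose_mul_mul_same_eq_zero
    ((hB.posSemidef.conjTranspose_mul_mul_same X).trace_eq_zero_iff.mp hzero)

lemma PosDef.bijective_mul_add_mul (hB : B.PosDef) :
    Function.Bijective fun X : Matrix n n 𝕜 => X * B + B * X := by
  have hinj : Function.Injective (LinearMap.mulRight 𝕜 B + LinearMap.mulLeft 𝕜 B) :=
    (injective_iff_map_eq_zero _).mpr fun _ hX => hB.eq_zero_of_mul_add_mul_eq_zero_s13 hX
  exact ⟨hinj, LinearMap.injective_iff_surjective.mp hinj⟩

end PosDef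

end Matrix

/-- For a symmetric positive definite `B` and an arbitrary `S`, there is a unique pair
`(S', Ω')` with `S'` symmetric, `Ω'` skew-symmetric, and `Ω'B + S' − BΩ'ᵀ = S`. -/
theorem stmt13 {r : ℕ} (B S : Matrix (Fin r) (Fin r) ℝ) (hB : B.PosDef) :
    ∃! q : Matrix (Fin r) (Fin r) ℝ × Matrix (Fin r) (Fin r) ℝ,
      q.1.IsSymm ∧ q.2ᵀ = -q.2 ∧ q.2 * B + q.1 - B * q.2ᵀ = S :=
  existsUnique_isSymm_transpose_eq_neg hB.isHermitian.eq hB.bijective_mul_add_mul S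
end

section
/- Let Y ∈ ℝ^{p×r} have full column rank r, let W be an r×r real symmetric positive definite matrix, let U ∈ St(r,p) satisfy Y = U(UᵀY) (i.e. the columns of U span the column space of Y), and let G ∈ ℝ^{p×p} be symmetric (playing the role of the Euclidean gradient ∇f(YYᵀ) of a symmetric objective f). Define the Riemannian gradient under the embedded geometry gradE := P_U G P_U + (I_p − P_U) G P_U + P_U G (I_p − P_U), the (horizontal lift of the) Riemannian gradient under the full-rank quotient geometry gradQ := 2 G Y W⁻¹, and the Moore–Penrose inverse Y† := (YᵀY)⁻¹Yᵀ. Then gradE = ( gradQ · W · Y† + (gradQ · W · Y†)ᵀ (I_p − Y Y†) ) / 2 and gradQ = 2 · gradE · Y · W⁻¹. -/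
open Matrix

lemma isUnit_of_full_rank {r : ℕ} (M : Matrix (Fin r) (Fin r) ℝ)
    (h : M.rank = r) : IsUnit M := by
  rw [← Matrix.mulVec_surjective_iff_isUnit]
  have : LinearMap.range M.mulVecLin = ⊤ := by
    apply Submodule.eq_top_of_finrank_eq
    rw [show Module.finrank ℝ ↥(LinearMap.range M.mulVecLin) = M.rank from rfl, h,
      Module.finrank_fintype_fun_eq_card, Fintype.card_fin]
  intro v
  obtain ⟨w, hw⟩ := LinearMap.range_eq_top.mp this v
  exact ⟨w, hw⟩

/-- Riemannian gradient connection between the embedded geometry and the full-rank quotient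
geometry for fixed-rank PSD matrix optimization: with `gradE` the embedded Riemannian gradient
and `gradQ` the horizontal lift of the quotient Riemannian gradient (for a symmetric Euclidean
gradient `G = ∇f(YYᵀ)`), one has
`gradE = (gradQ·W·Y† + (gradQ·W·Y†)ᵀ(I − YY†))/2` and `gradQ = 2·gradE·Y·W⁻¹`. -/
theorem stmt16 {p r : ℕ}
    (Y : Matrix (Fin p) (Fin r) ℝ) (hYrank : Y.rank = r)
    (W : Matrix (Fin r) (Fin r) ℝ) (hW : W.PosDef)
    (U : Matrix (Fin p) (Fin r) ℝ) (hU : Uᵀ * U = 1) (hUY : Y = U * (Uᵀ * Y))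
    (G : Matrix (Fin p) (Fin p) ℝ) (hG : G.IsSymm)
    (gradE : Matrix (Fin p) (Fin p) ℝ)
    (hgradE : gradE = U * Uᵀ * G * (U * Uᵀ) + (1 - U * Uᵀ) * G * (U * Uᵀ)
        + U * Uᵀ * G * (1 - U * Uᵀ))
    (gradQ : Matrix (Fin p) (Fin r) ℝ) (hgradQ : gradQ = (2 : ℝ) • (G * Y * W⁻¹))
    (Ydag : Matrix (Fin r) (Fin p) ℝ) (hYdag : Ydag = (Yᵀ * Y)⁻¹ * Yᵀ) :
    gradE = ((1 : ℝ) / 2) •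
        (gradQ * W * Ydag + (gradQ * W * Ydag)ᵀ * (1 - Y * Ydag)) ∧
    gradQ = (2 : ℝ) • (gradE * Y * W⁻¹) := by
  set A := Uᵀ * Y with hA
  have hYt : Yᵀ = Aᵀ * Uᵀ := by rw [hUY, Matrix.transpose_mul]
  have hYtY : Yᵀ * Y = Aᵀ * A := by
    rw [hYt]
    conv_lhs => rw [hUY]
    rw [Matrix.mul_assoc, ← Matrix.mul_assoc Uᵀ U A, hU, Matrix.one_mul]
  have hYtYu : IsUnit (Yᵀ * Y) := by
    apply isUnit_of_full_rank
    rw [Matrix.rank_transpose_mul_self, hYrank]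
  have hAdet : IsUnit A.det := by
    have h := hYtYu
    rw [hYtY] at h
    have hdet : IsUnit (Aᵀ * A).det := (Matrix.isUnit_iff_isUnit_det _).mp h
    rw [Matrix.det_mul, Matrix.det_transpose] at hdet
    exact isUnit_of_mul_isUnit_right hdet
  have hAtdet : IsUnit (Aᵀ).det := by rwa [Matrix.det_transpose]
  have hA1 : A * A⁻¹ = 1 := Matrix.mul_nonsing_inv _ hAdet
  have hAt2 : (Aᵀ)⁻¹ * Aᵀ = 1 := Matrix.nonsing_inv_mul _ hAtdet
  have hWdet : IsUnit W.det := isUnit_iff_ne_zero.mpr hW.det_pos.ne'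
  have hWinv : W⁻¹ * W = 1 := Matrix.nonsing_inv_mul _ hWdet
  -- Ydag = A⁻¹ Uᵀ
  have hYdag2 : Ydag = A⁻¹ * Uᵀ := by
    rw [hYdag, hYtY, hYt, Matrix.mul_inv_rev, Matrix.mul_assoc,
      ← Matrix.mul_assoc (Aᵀ)⁻¹ Aᵀ Uᵀ, hAt2, Matrix.one_mul]
  have hYYdag : Y * Ydag = U * Uᵀ := by
    rw [hYdag2]
    conv_lhs => rw [hUY]
    rw [Matrix.mul_assoc, ← Matrix.mul_assoc A A⁻¹ Uᵀ, hA1, Matrix.one_mul]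
  have hPY : U * Uᵀ * Y = Y := by
    rw [Matrix.mul_assoc, ← hA, ← hUY]
  have h0 : (1 - U * Uᵀ) * Y = 0 := by
    rw [Matrix.sub_mul, Matrix.one_mul, hPY, sub_self]
  have hQWY : gradQ * W * Ydag = (2:ℝ) • (G * (U * Uᵀ)) := by
    rw [hgradQ, Matrix.smul_mul, Matrix.smul_mul]
    congr 1
    rw [Matrix.mul_assoc (G * Y) W⁻¹ W, hWinv, Matrix.mul_one, Matrix.mul_assoc, hYYdag]
  have hGs : Gᵀ = G := hG
  have hT : ((2:ℝ) • (G * (U * Uᵀ)))ᵀ = (2:ℝ) • ((U * Uᵀ) * G) := by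
    rw [Matrix.transpose_smul]
    congr 1
    rw [Matrix.transpose_mul, Matrix.transpose_mul, Matrix.transpose_transpose, hGs]
  constructor
  · rw [hgradE, hQWY, hT, hYYdag, Matrix.smul_mul, ← smul_add, smul_smul]
    norm_num
    noncomm_ring
  · have h1 : (U * Uᵀ * G * (U * Uᵀ) + (1 - U * Uᵀ) * G * (U * Uᵀ)
        + U * Uᵀ * G * (1 - U * Uᵀ)) * Y = G * Y := by
      rw [Matrix.add_mul, Matrix.add_mul, Matrix.mul_assoc (U * Uᵀ * G) (U * Uᵀ) Y, hPY,
        Matrix.mul_assoc ((1 - U * Uᵀ) * G) (U * Uᵀ) Y, hPY,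
        Matrix.mul_assoc (U * Uᵀ * G) (1 - U * Uᵀ) Y, h0, Matrix.mul_zero, add_zero,
        ← Matrix.add_mul, ← Matrix.add_mul,
        show U * Uᵀ + (1 - U * Uᵀ) = 1 by abel, Matrix.one_mul]
    rw [hgradQ, hgradE]
    congr 1
    rw [h1]
end

section
/- Let Y ∈ ℝ^{p×r} have full column rank r, let W be an r×r real symmetric positive definite matrix, let U ∈ St(r,p) with orthonormal completion U⊥ and invertible P := UᵀY satisfy Y = UP, and set Σ := Uᵀ(YYᵀ)U = PPᵀ. Let G ∈ ℝ^{p×p} be symmetric with GY = 0 (the first-order stationarity condition: the Riemannian gradient of h_{r+}([Y]) = f(YYᵀ) vanishes), and let H be a symmetric bilinear form on ℝ^{p×p} (playing the role of the Euclidean Hessian ∇²f(YYᵀ)). Then for every horizontal vector θ := (US + U⊥D̃)P⁻ᵀ with S P⁻ᵀ W P⁻¹ symmetric and D̃ ∈ ℝ^{(p−r)×r}, one has H(Yθᵀ + θYᵀ, Yθᵀ + θYᵀ) + 2·tr(G θθᵀ) = H(ξ, ξ) + 2·tr(G · U⊥ D Σ⁻¹ Dᵀ U⊥ᵀ), where ξ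 := Yθᵀ + θYᵀ and D := U⊥ᵀ θ Pᵀ; that is, the quadratic form of the Riemannian Hessian of the quotient objective at the first-order stationary point [Y] evaluated at θ equals the quadratic form of the Riemannian Hessian of the embedded objective at X = YYᵀ evaluated at ξ. -/
open Matrix

/-- Riemannian Hessian connection between the embedded geometry and the full-rank quotient
geometry for fixed-rank PSD matrix optimization, at a first-order stationary point
(`G = ∇f(YYᵀ)` symmetric with `GY = 0`, `H = ∇²f(YYᵀ)` a symmetric bilinear form):
for every horizontal vector `θ = (US + U⊥D̃)P⁻ᵀ`,
`H[Yθᵀ+θYᵀ, Yθᵀ+θYᵀ] + 2⟨G, θθᵀ⟩ = H[ξ, ξ] + 2⟨G, U⊥DΣ⁻¹DᵀU⊥ᵀ⟩`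
where `ξ = Yθᵀ + θYᵀ` and `D = U⊥ᵀθPᵀ`. -/
theorem stmt17 {p r : ℕ}
    (Y : Matrix (Fin p) (Fin r) ℝ) (hYrank : Y.rank = r)
    (W : Matrix (Fin r) (Fin r) ℝ) (hW : W.PosDef)
    (U : Matrix (Fin p) (Fin r) ℝ) (Uperp : Matrix (Fin p) (Fin (p - r)) ℝ)
    (hU : Uᵀ * U = 1) (hUperp : Uperpᵀ * Uperp = 1) (hUUperp : Uᵀ * Uperp = 0)
    (P : Matrix (Fin r) (Fin r) ℝ) (hP : IsUnit P) (hPdef : P = Uᵀ * Y) (hYUP : Y = U * P)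
    (Sigm : Matrix (Fin r) (Fin r) ℝ) (hSigm : Sigm = P * Pᵀ)
    (G : Matrix (Fin p) (Fin p) ℝ) (hG : G.IsSymm) (hGY : G * Y = 0)
    (H : Matrix (Fin p) (Fin p) ℝ →ₗ[ℝ] Matrix (Fin p) (Fin p) ℝ →ₗ[ℝ] ℝ)
    (hH : ∀ A B, H A B = H B A)
    (S : Matrix (Fin r) (Fin r) ℝ) (hS : (S * (P⁻¹)ᵀ * W * P⁻¹).IsSymm)
    (Dt : Matrix (Fin (p - r)) (Fin r) ℝ)
    (θ : Matrix (Fin p) (Fin r) ℝ) (hθ : θ = (U * S + Uperp * Dt) * (P⁻¹)ᵀ)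
    (ξ : Matrix (Fin p) (Fin p) ℝ) (hξ : ξ = Y * θᵀ + θ * Yᵀ)
    (D : Matrix (Fin (p - r)) (Fin r) ℝ) (hD : D = Uperpᵀ * θ * Pᵀ) :
    H (Y * θᵀ + θ * Yᵀ) (Y * θᵀ + θ * Yᵀ) + 2 * Matrix.trace (G * (θ * θᵀ))
      = H ξ ξ + 2 * Matrix.trace (G * (Uperp * D * Sigm⁻¹ * Dᵀ * Uperpᵀ)) := by

  have hPd : IsUnit P.det := (Matrix.isUnit_iff_isUnit_det P).mp hP
  have hPinv : P * P⁻¹ = 1 := Matrix.mul_nonsing_inv P hPd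
  have hGU : G * U = 0 := by
    have h1 : G * U * P = 0 := by rw [Matrix.mul_assoc, ← hYUP, hGY]
    calc G * U = G * U * (P * P⁻¹) := by rw [hPinv, Matrix.mul_one]
    _ = G * U * P * P⁻¹ := by simp [Matrix.mul_assoc]
    _ = 0 := by rw [h1, Matrix.zero_mul]
  have hUG : Uᵀ * G = 0 := by
    have h2 := congrArg Matrix.transpose hGU
    rw [Matrix.transpose_mul, Matrix.transpose_zero] at h2
    rwa [hG.eq] at h2
  have hUpU : Uperpᵀ * U = 0 := by
    have h3 := congrArg Matrix.transpose hUUperp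
    rwa [Matrix.transpose_mul, Matrix.transpose_zero] at h3
  have hDDt : D = Dt := by
    rw [hD, hθ, ← Matrix.mul_assoc, Matrix.mul_add, ← Matrix.mul_assoc,
      ← Matrix.mul_assoc, hUpU, Matrix.zero_mul, zero_add, hUperp,
      Matrix.one_mul, Matrix.mul_assoc, ← Matrix.transpose_mul, hPinv,
      Matrix.transpose_one, Matrix.mul_one]
  have hSiginv : Sigm⁻¹ = (P⁻¹)ᵀ * P⁻¹ := by
    rw [hSigm, Matrix.mul_inv_rev, Matrix.transpose_nonsing_inv]
  have hGθ : G * θ = G * (Uperp * (Dt * (P⁻¹)ᵀ)) := by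
    rw [hθ, ← Matrix.mul_assoc, Matrix.mul_add, ← Matrix.mul_assoc, hGU,
      Matrix.zero_mul, zero_add]
    simp [Matrix.mul_assoc]
  have hθT : θᵀ = P⁻¹ * (Sᵀ * Uᵀ) + P⁻¹ * (Dtᵀ * Uperpᵀ) := by
    rw [hθ]
    simp [Matrix.transpose_mul, Matrix.mul_add, Matrix.add_mul, Matrix.mul_assoc]
  have htr : Matrix.trace (G * (θ * θᵀ)) =
      Matrix.trace (G * (Uperp * D * Sigm⁻¹ * Dᵀ * Uperpᵀ)) := by
    have hsplit : G * (θ * θᵀ) =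
        G * (Uperp * (Dt * ((P⁻¹)ᵀ * (P⁻¹ * (Sᵀ * Uᵀ))))) +
        G * (Uperp * (Dt * ((P⁻¹)ᵀ * (P⁻¹ * (Dtᵀ * Uperpᵀ))))) := by
      rw [← Matrix.mul_assoc, hGθ, hθT]
      simp [Matrix.mul_add, Matrix.mul_assoc]
    have hz : Matrix.trace (G * (Uperp * (Dt * ((P⁻¹)ᵀ * (P⁻¹ * (Sᵀ * Uᵀ)))))) = 0 := by
      have : G * (Uperp * (Dt * ((P⁻¹)ᵀ * (P⁻¹ * (Sᵀ * Uᵀ))))) =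
          (G * Uperp * Dt * (P⁻¹)ᵀ * P⁻¹ * Sᵀ) * Uᵀ := by
        simp [Matrix.mul_assoc]
      rw [this, Matrix.trace_mul_comm]
      have : Uᵀ * (G * Uperp * Dt * (P⁻¹)ᵀ * P⁻¹ * Sᵀ) = 0 := by
        rw [show G * Uperp * Dt * (P⁻¹)ᵀ * P⁻¹ * Sᵀ =
          G * (Uperp * Dt * (P⁻¹)ᵀ * P⁻¹ * Sᵀ) by simp [Matrix.mul_assoc],
          ← Matrix.mul_assoc, hUG, Matrix.zero_mul]
      rw [this, Matrix.trace_zero]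
    rw [hsplit, Matrix.trace_add, hz, zero_add, hDDt, hSiginv]
    congr 1
    simp [Matrix.mul_assoc]
  rw [← hξ, htr]
end

section
/- Let L ∈ ℝ^{p₁×r} and R ∈ ℝ^{p₂×r} have full column rank r, let W and V be r×r real symmetric positive definite matrices, let U ∈ St(r,p₁) satisfy L = U(UᵀL) and V₀ ∈ St(r,p₂) satisfy R = V₀(V₀ᵀR) (i.e. their columns span the column spaces of L and R respectively), and let G ∈ ℝ^{p₁×p₂} be arbitrary (playing the role of the Euclidean gradient ∇f(LRᵀ)). Define gradE := P_U G P_{V₀} + (I_{p₁} − P_U) G P_{V₀} + P_U G (I_{p₂} − P_{V₀}), gradQ_L := G R W⁻¹, gradQ_R := Gᵀ L V⁻¹, and the Moore–Penrose inverses L† := (LᵀL)⁻¹Lᵀ and R† := (RᵀR)⁻¹Rᵀ. Then gradE = gradQ_L · W · R† + (gradQ_R · V · L†)ᵀ (I_{p₂} − R R†), and moreover gradQ_L = gradE · R · W⁻¹ and gradQ_R = gradEᵀ · L · V⁻¹. -/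
open Matrix

lemma isUnit_of_rank_full {r : ℕ} (A : Matrix (Fin r) (Fin r) ℝ) (h : A.rank = r) :
    IsUnit A := by
  rw [← Matrix.mulVec_surjective_iff_isUnit]
  have htop : LinearMap.range A.mulVecLin = ⊤ := by
    apply Submodule.eq_top_of_finrank_eq
    rw [Module.finrank_fintype_fun_eq_card]
    simpa [Matrix.rank] using h
  intro v
  obtain ⟨w, hw⟩ := LinearMap.range_eq_top.mp htop v
  exact ⟨w, hw⟩

/-- If `A = B * (Bᵀ * A)` with `Bᵀ * B = 1` and `A` has full column rank, then
`A * (AᵀA)⁻¹ * Aᵀ = B * Bᵀ`. -/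
lemma proj_eq {p r : ℕ} (A : Matrix (Fin p) (Fin r) ℝ) (B : Matrix (Fin p) (Fin r) ℝ)
    (hB : Bᵀ * B = 1) (hBA : A = B * (Bᵀ * A)) (hrank : A.rank = r) :
    A * ((Aᵀ * A)⁻¹ * Aᵀ) = B * Bᵀ := by
  obtain ⟨M, hM⟩ : ∃ X, Bᵀ * A = X := ⟨_, rfl⟩
  rw [hM] at hBA
  have hAtA : Aᵀ * A = Mᵀ * M := by
    calc Aᵀ * A = (B * M)ᵀ * (B * M) := by rw [← hBA]
    _ = Mᵀ * (Bᵀ * B) * M := by simp [Matrix.transpose_mul, Matrix.mul_assoc]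
    _ = Mᵀ * M := by rw [hB]; simp
  have hUnit : IsUnit (Mᵀ * M) := by
    rw [← hAtA]
    exact isUnit_of_rank_full _ (by rw [Matrix.rank_transpose_mul_self]; exact hrank)
  have hMu : IsUnit M := by
    have := (Matrix.isUnit_iff_isUnit_det _).mp hUnit
    rw [Matrix.det_mul, Matrix.det_transpose] at this
    exact (Matrix.isUnit_iff_isUnit_det _).mpr (isUnit_of_mul_isUnit_left this)
  have hdet : IsUnit M.det := (Matrix.isUnit_iff_isUnit_det _).mp hMu
  have hAt : Aᵀ = Mᵀ * Bᵀ := by conv_lhs => rw [hBA, Matrix.transpose_mul]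
  rw [hAtA, hAt]
  conv_lhs => rw [hBA]
  rw [Matrix.mul_inv_rev]
  rw [show B * M * (M⁻¹ * (Mᵀ)⁻¹ * (Mᵀ * Bᵀ)) = B * ((M * M⁻¹) * (((Mᵀ)⁻¹ * Mᵀ) * Bᵀ)) from by
    simp only [Matrix.mul_assoc]]
  rw [Matrix.mul_nonsing_inv _ hdet,
    Matrix.nonsing_inv_mul _ (by rwa [Matrix.det_transpose]), Matrix.one_mul, Matrix.one_mul]

/-- Riemannian gradient connection between the embedded geometry and the full-rank quotient
geometry for general fixed-rank matrix optimization: with `gradE` the embedded Riemannian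
gradient and `(gradQL, gradQR)` the horizontal lift of the quotient Riemannian gradient
(for `G = ∇f(LRᵀ)`),
`gradE = gradQL·W·R† + (gradQR·V·L†)ᵀ(I − RR†)`, `gradQL = gradE·R·W⁻¹`,
`gradQR = gradEᵀ·L·V⁻¹`. -/
theorem stmt18 {p₁ p₂ r : ℕ}
    (L : Matrix (Fin p₁) (Fin r) ℝ) (R : Matrix (Fin p₂) (Fin r) ℝ)
    (hLrank : L.rank = r) (hRrank : R.rank = r)
    (W V : Matrix (Fin r) (Fin r) ℝ) (hW : W.PosDef) (hV : V.PosDef)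
    (U : Matrix (Fin p₁) (Fin r) ℝ) (hU : Uᵀ * U = 1) (hUL : L = U * (Uᵀ * L))
    (V₀ : Matrix (Fin p₂) (Fin r) ℝ) (hV₀ : V₀ᵀ * V₀ = 1) (hV₀R : R = V₀ * (V₀ᵀ * R))
    (G : Matrix (Fin p₁) (Fin p₂) ℝ)
    (gradE : Matrix (Fin p₁) (Fin p₂) ℝ)
    (hgradE : gradE = U * Uᵀ * G * (V₀ * V₀ᵀ) + (1 - U * Uᵀ) * G * (V₀ * V₀ᵀ)
        + U * Uᵀ * G * (1 - V₀ * V₀ᵀ))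
    (gradQL : Matrix (Fin p₁) (Fin r) ℝ) (hgradQL : gradQL = G * R * W⁻¹)
    (gradQR : Matrix (Fin p₂) (Fin r) ℝ) (hgradQR : gradQR = Gᵀ * L * V⁻¹)
    (Ldag : Matrix (Fin r) (Fin p₁) ℝ) (hLdag : Ldag = (Lᵀ * L)⁻¹ * Lᵀ)
    (Rdag : Matrix (Fin r) (Fin p₂) ℝ) (hRdag : Rdag = (Rᵀ * R)⁻¹ * Rᵀ) :
    gradE = gradQL * W * Rdag + (gradQR * V * Ldag)ᵀ * (1 - R * Rdag) ∧
    gradQL = gradE * R * W⁻¹ ∧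
    gradQR = gradEᵀ * L * V⁻¹ := by
  have hWdet : IsUnit W.det := (Matrix.isUnit_iff_isUnit_det _).mp hW.isUnit
  have hVdet : IsUnit V.det := (Matrix.isUnit_iff_isUnit_det _).mp hV.isUnit
  have hWW : W⁻¹ * W = 1 := Matrix.nonsing_inv_mul _ hWdet
  have hVV : V⁻¹ * V = 1 := Matrix.nonsing_inv_mul _ hVdet
  obtain ⟨P, hP⟩ : ∃ X, U * Uᵀ = X := ⟨_, rfl⟩
  obtain ⟨Q, hQ⟩ : ∃ X, V₀ * V₀ᵀ = X := ⟨_, rfl⟩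
  have hPt : Pᵀ = P := by rw [← hP, Matrix.transpose_mul, Matrix.transpose_transpose]
  have hQt : Qᵀ = Q := by rw [← hQ, Matrix.transpose_mul, Matrix.transpose_transpose]
  have hLp : L * Ldag = P := by rw [hLdag, ← hP]; exact proj_eq L U hU hUL hLrank
  have hRp : R * Rdag = Q := by rw [hRdag, ← hQ]; exact proj_eq R V₀ hV₀ hV₀R hRrank
  have hQR : Q * R = R := by
    rw [← hQ]
    conv_lhs => rw [hV₀R]
    rw [Matrix.mul_assoc, ← Matrix.mul_assoc V₀ᵀ, hV₀, Matrix.one_mul, ← hV₀R]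
  have hPL : P * L = L := by
    rw [← hP]
    conv_lhs => rw [hUL]
    rw [Matrix.mul_assoc, ← Matrix.mul_assoc Uᵀ, hU, Matrix.one_mul, ← hUL]
  rw [hP, hQ] at hgradE
  have hE : gradE = G * Q + P * G - P * G * Q := by rw [hgradE]; simp only [Matrix.sub_mul, Matrix.mul_sub, Matrix.add_mul, Matrix.mul_add,
      Matrix.one_mul, Matrix.mul_one, Matrix.mul_assoc]; abel
  refine ⟨?_, ?_, ?_⟩
  · rw [hgradQL, hgradQR, hE]
    have h1 : G * R * W⁻¹ * W * Rdag = G * Q := by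
      rw [Matrix.mul_assoc (G * R), hWW, Matrix.mul_one, Matrix.mul_assoc, hRp]
    have h2 : (Gᵀ * L * V⁻¹ * V * Ldag)ᵀ = P * G := by
      rw [Matrix.mul_assoc (Gᵀ * L), hVV, Matrix.mul_one, Matrix.mul_assoc, hLp,
        Matrix.transpose_mul, Matrix.transpose_transpose, hPt]
    rw [h1, h2, hRp]
    simp only [Matrix.sub_mul, Matrix.mul_sub, Matrix.add_mul, Matrix.mul_add,
      Matrix.one_mul, Matrix.mul_one, Matrix.mul_assoc]; abel
  · rw [hgradQL, hE]
    have key : (G * Q + P * G - P * G * Q) * R = G * R := by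
      rw [Matrix.sub_mul, Matrix.add_mul, Matrix.mul_assoc G Q R,
        Matrix.mul_assoc (P * G) Q R, hQR]
      simp only [Matrix.sub_mul, Matrix.mul_sub, Matrix.add_mul, Matrix.mul_add,
      Matrix.one_mul, Matrix.mul_one, Matrix.mul_assoc]; abel
    rw [key]
  · rw [hgradQR, hE]
    have key : (G * Q + P * G - P * G * Q)ᵀ * L = Gᵀ * L := by
      simp only [Matrix.transpose_sub, Matrix.transpose_add, Matrix.transpose_mul, hPt, hQt]
      rw [Matrix.sub_mul, Matrix.add_mul, Matrix.mul_assoc Gᵀ P L, hPL,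
        Matrix.mul_assoc Q (Gᵀ * P) L, Matrix.mul_assoc Gᵀ P L, hPL]
      simp only [Matrix.sub_mul, Matrix.mul_sub, Matrix.add_mul, Matrix.mul_add,
      Matrix.one_mul, Matrix.mul_one, Matrix.mul_assoc]; abel
    rw [key]
end

section
/- Let L ∈ ℝ^{p₁×r} and R ∈ ℝ^{p₂×r} have full column rank r, let W and V be r×r real symmetric positive definite matrices, let U ∈ St(r,p₁) with orthonormal completion U⊥ and invertible P₁ := UᵀL satisfy L = UP₁, let V₀ ∈ St(r,p₂) with orthonormal completion V₀⊥ and invertible P₂ := V₀ᵀR satisfy R = V₀P₂, and set Σ := Uᵀ(LRᵀ)V₀ = P₁P₂ᵀ. Let G ∈ ℝ^{p₁×p₂} satisfy GR = 0 and GᵀL = 0 (the first-order stationarity condition: the Riemannian gradient of h_r([L,R]) = f(LRᵀ) vanishes), and let H be a symmetric bilinear form on ℝ^{p₁×p₂} (playing the role of the Euclidean Hessian ∇²f(LRᵀ)). Then for every horizontal pair θ_L := (U S P₂ W⁻¹ P₂ᵀ + U⊥D̃₁) P₂⁻ᵀ, θ_R := (V₀ Sᵀ P₁ V⁻¹ P₁ᵀ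 + V₀⊥D̃₂) P₁⁻ᵀ with S ∈ ℝ^{r×r}, D̃₁ ∈ ℝ^{(p₁−r)×r}, D̃₂ ∈ ℝ^{(p₂−r)×r}, one has H(Lθ_Rᵀ + θ_LRᵀ, Lθ_Rᵀ + θ_LRᵀ) + 2·tr(Gᵀ θ_L θ_Rᵀ) = H(ξ, ξ) + 2·tr(Gᵀ · U⊥ D₁ Σ⁻¹ D₂ᵀ V₀⊥ᵀ), where ξ := Lθ_Rᵀ + θ_LRᵀ, D₁ := U⊥ᵀ θ_L P₂ᵀ and D₂ := V₀⊥ᵀ θ_R P₁ᵀ; that is, the quadratic form of the Riemannian Hessian of the quotient objective at the first-order stationary point [L,R] evaluated at (θ_L, θ_R) equals the quadratic form of the Riemannian Hessian of the embedded objective at X = LRᵀ evaluated at ξ. -/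
open Matrix

/-- Riemannian Hessian connection between the embedded geometry and the full-rank quotient
geometry for general fixed-rank matrix optimization, at a first-order stationary point
(`G = ∇f(LRᵀ)` with `GR = 0` and `GᵀL = 0`, `H = ∇²f(LRᵀ)` a symmetric bilinear form):
for every horizontal pair `(θ_L, θ_R)`,
`H[Lθ_Rᵀ+θ_LRᵀ, Lθ_Rᵀ+θ_LRᵀ] + 2⟨G, θ_Lθ_Rᵀ⟩ = H[ξ, ξ] + 2⟨G, U⊥D₁Σ⁻¹D₂ᵀV₀⊥ᵀ⟩`
where `ξ = Lθ_Rᵀ + θ_LRᵀ`, `D₁ = U⊥ᵀθ_LP₂ᵀ` and `D₂ = V₀⊥ᵀθ_RP₁ᵀ`. -/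
theorem stmt19 {p₁ p₂ r : ℕ}
    (L : Matrix (Fin p₁) (Fin r) ℝ) (R : Matrix (Fin p₂) (Fin r) ℝ)
    (hLrank : L.rank = r) (hRrank : R.rank = r)
    (W V : Matrix (Fin r) (Fin r) ℝ) (hW : W.PosDef) (hV : V.PosDef)
    (U : Matrix (Fin p₁) (Fin r) ℝ) (Uperp : Matrix (Fin p₁) (Fin (p₁ - r)) ℝ)
    (hU : Uᵀ * U = 1) (hUperp : Uperpᵀ * Uperp = 1) (hUUperp : Uᵀ * Uperp = 0)
    (P₁ : Matrix (Fin r) (Fin r) ℝ) (hP₁ : IsUnit P₁) (hP₁def : P₁ = Uᵀ * L)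
    (hLUP : L = U * P₁)
    (V₀ : Matrix (Fin p₂) (Fin r) ℝ) (V₀perp : Matrix (Fin p₂) (Fin (p₂ - r)) ℝ)
    (hV₀ : V₀ᵀ * V₀ = 1) (hV₀perp : V₀perpᵀ * V₀perp = 1) (hV₀V₀perp : V₀ᵀ * V₀perp = 0)
    (P₂ : Matrix (Fin r) (Fin r) ℝ) (hP₂ : IsUnit P₂) (hP₂def : P₂ = V₀ᵀ * R)
    (hRVP : R = V₀ * P₂)
    (Sigm : Matrix (Fin r) (Fin r) ℝ) (hSigm : Sigm = P₁ * P₂ᵀ)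
    (G : Matrix (Fin p₁) (Fin p₂) ℝ) (hGR : G * R = 0) (hGL : Gᵀ * L = 0)
    (H : Matrix (Fin p₁) (Fin p₂) ℝ →ₗ[ℝ] Matrix (Fin p₁) (Fin p₂) ℝ →ₗ[ℝ] ℝ)
    (hH : ∀ A B, H A B = H B A)
    (S : Matrix (Fin r) (Fin r) ℝ)
    (Dt₁ : Matrix (Fin (p₁ - r)) (Fin r) ℝ) (Dt₂ : Matrix (Fin (p₂ - r)) (Fin r) ℝ)
    (θL : Matrix (Fin p₁) (Fin r) ℝ)
    (hθL : θL = (U * S * P₂ * W⁻¹ * P₂ᵀ + Uperp * Dt₁) * (P₂⁻¹)ᵀ)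
    (θR : Matrix (Fin p₂) (Fin r) ℝ)
    (hθR : θR = (V₀ * Sᵀ * P₁ * V⁻¹ * P₁ᵀ + V₀perp * Dt₂) * (P₁⁻¹)ᵀ)
    (ξ : Matrix (Fin p₁) (Fin p₂) ℝ) (hξ : ξ = L * θRᵀ + θL * Rᵀ)
    (D₁ : Matrix (Fin (p₁ - r)) (Fin r) ℝ) (hD₁ : D₁ = Uperpᵀ * θL * P₂ᵀ)
    (D₂ : Matrix (Fin (p₂ - r)) (Fin r) ℝ) (hD₂ : D₂ = V₀perpᵀ * θR * P₁ᵀ) :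
    H (L * θRᵀ + θL * Rᵀ) (L * θRᵀ + θL * Rᵀ) + 2 * Matrix.trace (Gᵀ * (θL * θRᵀ))
      = H ξ ξ + 2 * Matrix.trace (Gᵀ * (Uperp * D₁ * Sigm⁻¹ * D₂ᵀ * V₀perpᵀ)) := by
  have hd₁ : IsUnit P₁.det := (Matrix.isUnit_iff_isUnit_det P₁).mp hP₁
  have hd₂ : IsUnit P₂.det := (Matrix.isUnit_iff_isUnit_det P₂).mp hP₂
  have h1r : P₁ * P₁⁻¹ = 1 := Matrix.mul_nonsing_inv _ hd₁
  have h2r : P₂ * P₂⁻¹ = 1 := Matrix.mul_nonsing_inv _ hd₂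
  have hGU : Gᵀ * U = 0 := by
    have h0 : Gᵀ * L * P₁⁻¹ = 0 := by rw [hGL]; simp
    rwa [hLUP, Matrix.mul_assoc, Matrix.mul_assoc, h1r, Matrix.mul_one] at h0
  have hGV : G * V₀ = 0 := by
    have h0 : G * R * P₂⁻¹ = 0 := by rw [hGR]; simp
    rwa [hRVP, Matrix.mul_assoc, Matrix.mul_assoc, h2r, Matrix.mul_one] at h0
  have hUpU : Uperpᵀ * U = 0 := by
    have := congrArg Matrix.transpose hUUperp
    simpa [Matrix.transpose_mul] using this
  have hVpV : V₀perpᵀ * V₀ = 0 := by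
    have := congrArg Matrix.transpose hV₀V₀perp
    simpa [Matrix.transpose_mul] using this
  set a : Matrix (Fin r) (Fin r) ℝ := S * P₂ * W⁻¹ * P₂ᵀ * (P₂⁻¹)ᵀ with ha
  set b : Matrix (Fin (p₁ - r)) (Fin r) ℝ := Dt₁ * (P₂⁻¹)ᵀ with hb
  set c : Matrix (Fin r) (Fin r) ℝ := Sᵀ * P₁ * V⁻¹ * P₁ᵀ * (P₁⁻¹)ᵀ with hc
  set d : Matrix (Fin (p₂ - r)) (Fin r) ℝ := Dt₂ * (P₁⁻¹)ᵀ with hd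
  have hθL' : θL = U * a + Uperp * b := by
    rw [hθL, Matrix.add_mul, ha, hb]; simp only [Matrix.mul_assoc]
  have hθR' : θR = V₀ * c + V₀perp * d := by
    rw [hθR, Matrix.add_mul, hc, hd]; simp only [Matrix.mul_assoc]
  have hθRT : θRᵀ = cᵀ * V₀ᵀ + dᵀ * V₀perpᵀ := by
    rw [hθR', Matrix.transpose_add]
    congr 1 <;> exact Matrix.transpose_mul _ _
  have hV₀tr : ∀ M : Matrix (Fin p₁) (Fin r) ℝ,
      Matrix.trace (Gᵀ * (M * V₀ᵀ)) = 0 := by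
    intro M
    rw [← Matrix.mul_assoc, Matrix.trace_mul_comm, ← Matrix.mul_assoc,
      ← Matrix.transpose_mul, hGV]
    simp
  have hD₁' : D₁ = Dt₁ := by
    have e : Uperpᵀ * (U * a + Uperp * b) = b := by
      rw [Matrix.mul_add, ← Matrix.mul_assoc Uperpᵀ U a, ← Matrix.mul_assoc Uperpᵀ Uperp b,
        hUpU, hUperp]
      simp
    rw [hD₁, hθL', e, hb, Matrix.mul_assoc, ← Matrix.transpose_mul, h2r]
    simp
  have hD₂' : D₂ = Dt₂ := by
    have e : V₀perpᵀ * (V₀ * c + V₀perp * d) = d := by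
      rw [Matrix.mul_add, ← Matrix.mul_assoc V₀perpᵀ V₀ c, ← Matrix.mul_assoc V₀perpᵀ V₀perp d,
        hVpV, hV₀perp]
      simp
    rw [hD₂, hθR', e, hd, Matrix.mul_assoc, ← Matrix.transpose_mul, h1r]
    simp
  have hSinv : Sigm⁻¹ = (P₂⁻¹)ᵀ * P₁⁻¹ := by
    rw [hSigm, Matrix.mul_inv_rev, Matrix.transpose_nonsing_inv]
  have htr : Matrix.trace (Gᵀ * (θL * θRᵀ))
      = Matrix.trace (Gᵀ * (Uperp * D₁ * Sigm⁻¹ * D₂ᵀ * V₀perpᵀ)) := by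
    rw [hθL', hθRT, hD₁', hD₂', hSinv]
    simp only [Matrix.add_mul, Matrix.mul_add, Matrix.trace_add]
    have z1 : Matrix.trace (Gᵀ * (U * a * (cᵀ * V₀ᵀ))) = 0 := by
      rw [show U * a * (cᵀ * V₀ᵀ) = U * a * cᵀ * V₀ᵀ from by
        simp only [Matrix.mul_assoc]]
      exact hV₀tr _
    have z2 : Matrix.trace (Gᵀ * (Uperp * b * (cᵀ * V₀ᵀ))) = 0 := by
      rw [show Uperp * b * (cᵀ * V₀ᵀ) = Uperp * b * cᵀ * V₀ᵀ from by
        simp only [Matrix.mul_assoc]]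
      exact hV₀tr _
    have z3 : Matrix.trace (Gᵀ * (U * a * (dᵀ * V₀perpᵀ))) = 0 := by
      rw [show Gᵀ * (U * a * (dᵀ * V₀perpᵀ)) = Gᵀ * U * (a * (dᵀ * V₀perpᵀ)) from by
        simp only [Matrix.mul_assoc], hGU]
      simp
    rw [z1, z2, z3]
    simp only [zero_add, add_zero]
    congr 1
    rw [hb, hd]
    simp only [Matrix.transpose_mul, Matrix.transpose_transpose, Matrix.mul_assoc]
  rw [htr, hξ]
end
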